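/- arXiv:math/0302030 — 13 statements merged into one kernel-verified Lean document; each statement's English description precedes it below -/
import Mathlib

section
/- Let μ be a nonzero real number and m a positive integer. Then the subspace ker (J − μ·id)^m of V is null, i.e. ⟨u, v⟩ = 0 for all u, v ∈ ker (J − μ·id)^m. -/
/-- Stmt 0: For nonzero μ and m ≥ 1, ker (J − μ·id)^m is a null (totally isotropic)
subspace of the pseudo-Euclidean space (V, B). -/
theorem stmt_0 {V : Type*} [AddCommGroup V] [Module ℝ V] [FiniteDimensional ℝ V]
    (B : LinearMap.BilinForm ℝ V) (hsymm : ∀ x y, B x y = B y x)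
    (hnd : B.Nondegenerate)
    (J : Module.End ℝ V) (hskew : ∀ x y, B (J x) y = - B x (J y))
    (μ : ℝ) (hμ : μ ≠ 0) (m : ℕ) (hm : 0 < m) :
    ∀ u v : V, u ∈ LinearMap.ker ((J - μ • 1) ^ m) →
      v ∈ LinearMap.ker ((J - μ • 1) ^ m) → B u v = 0 := by
  set W : Submodule ℝ V := LinearMap.ker ((J - μ • 1) ^ m) with hW
  -- skew relation for powers
  have key : ∀ (n : ℕ) (x y : V),
      B x (((J + μ • 1) ^ n) y) = (-1 : ℝ) ^ n * B (((J - μ • 1) ^ n) x) y := by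
    intro n
    induction n with
    | zero => simp
    | succ n ih =>
      intro x y
      have step : ∀ a b : V, B a ((J + μ • 1) b) = - B ((J - μ • 1) a) b := by
        intro a b
        have h1 := hskew a b
        simp only [LinearMap.add_apply, LinearMap.sub_apply, LinearMap.smul_apply,
          Module.End.one_apply, map_add, map_sub, map_smul, smul_eq_mul]
        linarith [h1]
      calc B x (((J + μ • 1) ^ (n+1)) y)
          = B x (((J + μ • 1) ^ n) ((J + μ • 1) y)) := by
            rw [pow_succ]; rfl
        _ = (-1:ℝ)^n * B (((J - μ • 1) ^ n) x) ((J + μ • 1) y) := ih x _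
        _ = (-1:ℝ)^n * (- B ((J - μ • 1) (((J - μ • 1) ^ n) x)) y) := by rw [step]
        _ = (-1:ℝ)^(n+1) * B (((J - μ • 1) ^ (n+1)) x) y := by
            rw [pow_succ' (J - μ • 1)]
            simp only [Module.End.mul_apply, pow_succ (-1:ℝ)]
            ring
  -- commutation
  have hJs : Commute J ((μ : ℝ) • (1 : Module.End ℝ V)) := (Commute.one_right J).smul_right μ
  have hcomm : Commute ((J + μ • 1) ^ m) ((J - μ • 1) ^ m) :=
    (((Commute.refl J).add_left hJs.symm).sub_right
      (hJs.add_left (Commute.refl _))).pow_pow m m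
  -- (J+μ)^m maps W to W
  have hmaps : ∀ x ∈ W, ((J + μ • 1) ^ m) x ∈ W := by
    intro x hx
    simp only [hW, LinearMap.mem_ker] at hx ⊢
    have : ((J - μ • 1) ^ m * (J + μ • 1) ^ m) x = ((J + μ • 1) ^ m * (J - μ • 1) ^ m) x := by
      rw [hcomm.eq]
    simpa [Module.End.mul_apply, hx] using this
  -- restriction is injective
  set p : W →ₗ[ℝ] W := ((J + μ • 1) ^ m).restrict hmaps
  have hinj : Function.Injective p := by
    rw [← LinearMap.ker_eq_bot, Submodule.eq_bot_iff]
    rintro ⟨x, hxW⟩ hx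
    have hx0 : ((J + μ • 1) ^ m) x = 0 := by
      have := congrArg (Subtype.val) (LinearMap.mem_ker.mp hx)
      simpa [p, LinearMap.restrict_apply] using this
    have hne : -μ ≠ μ := by intro h; apply hμ; linarith [h]
    have hdisj := J.disjoint_genEigenspace hne (m : ℕ∞) (m : ℕ∞)
    have hx1 : x ∈ J.genEigenspace (-μ) (m : ℕ∞) := by
      rw [Module.End.mem_genEigenspace_nat]
      simpa [sub_eq_add_neg, neg_smul] using hx0
    have hx2 : x ∈ J.genEigenspace μ (m : ℕ∞) := by
      rw [Module.End.mem_genEigenspace_nat]; exact hxW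
    have : x = 0 := by
      have := hdisj.le_bot (Submodule.mem_inf.mpr ⟨hx1, hx2⟩)
      simpa using this
    simp [this]
  have hsurj : Function.Surjective p := by
    rwa [← LinearMap.injective_iff_surjective]
  -- conclude
  intro u v hu hv
  obtain ⟨⟨w, hwW⟩, hw⟩ := hsurj ⟨v, hv⟩
  have hw' : ((J + μ • 1) ^ m) w = v := by
    have := congrArg Subtype.val hw
    simpa [p, LinearMap.restrict_apply] using this
  rw [← hw', key m u w]
  rw [hW, LinearMap.mem_ker] at hu
  rw [hu]
  simp
end

section
/- Let a, b be nonzero real numbers and k a positive integer. Then the subspace ker (J² − 2a·J + (a² + b²)·id)^k of V is null, i.e. ⟨u, v⟩ = 0 for all u, v in this kernel. -/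
open Polynomial

lemma copr_aux (a c : ℝ) (ha : a ≠ 0) (hc : c ≠ 0) :
    IsCoprime ((X:ℝ[X])^2 - 2 * C a * X + C c) ((X:ℝ[X])^2 + 2 * C a * X + C c) := by
  refine ⟨C ((4*a*c)⁻¹) * (X + 2 * C a), -(C ((4*a*c)⁻¹) * (X - 2 * C a)), ?_⟩
  have hsplit : (4:ℝ[X]) * C a * C c = C (4*a*c) := by
    rw [C_mul, C_mul, show (C (4:ℝ) : ℝ[X]) = 4 from map_ofNat C 4]
  have he : (C (4*a*c) : ℝ[X]) * C ((4*a*c)⁻¹) = 1 := by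
    rw [← C_mul, mul_inv_cancel₀ (by simp [ha, hc]), C_1]
  linear_combination (C ((4*a*c)⁻¹)) * hsplit + he

/-- Stmt 1: For nonzero a, b and k ≥ 1, ker (J² − 2aJ + (a²+b²)·id)^k is a null subspace. -/
theorem stmt_1 {V : Type*} [AddCommGroup V] [Module ℝ V] [FiniteDimensional ℝ V]
    (B : LinearMap.BilinForm ℝ V) (hsymm : ∀ x y, B x y = B y x)
    (hnd : B.Nondegenerate)
    (J : Module.End ℝ V) (hskew : ∀ x y, B (J x) y = - B x (J y))
    (a b : ℝ) (ha : a ≠ 0) (hb : b ≠ 0) (k : ℕ) (hk : 0 < k) :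
    ∀ u v : V, u ∈ LinearMap.ker ((J ^ 2 - (2 * a) • J + (a ^ 2 + b ^ 2) • 1) ^ k) →
      v ∈ LinearMap.ker ((J ^ 2 - (2 * a) • J + (a ^ 2 + b ^ 2) • 1) ^ k) → B u v = 0 := by
  intro u v hu hv
  set c : ℝ := a ^ 2 + b ^ 2 with hcdef
  have hc : c ≠ 0 := by positivity
  set P : Module.End ℝ V := J ^ 2 - (2 * a) • J + c • 1 with hPdef
  set Q : Module.End ℝ V := J ^ 2 + (2 * a) • J + c • 1 with hQdef
  rw [LinearMap.mem_ker] at hu hv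
  -- adjoint relations
  have hQP : ∀ x y, B (Q x) y = B x (P y) := by
    intro x y
    have h2 : B (J (J x)) y = B x (J (J y)) := by rw [hskew, hskew]; ring
    have h1 : B (J x) y = - B x (J y) := hskew x y
    simp only [hQdef, hPdef, LinearMap.add_apply, LinearMap.sub_apply, LinearMap.smul_apply,
      Module.End.one_apply, pow_two, Module.End.mul_apply, map_add, map_sub, map_smul,
      LinearMap.add_apply, LinearMap.smul_apply, smul_eq_mul]
    rw [h2, h1]
    ring
  have hPQ : ∀ x y, B (P x) y = B x (Q y) := by
    intro x y
    have h2 : B (J (J x)) y = B x (J (J y)) := by rw [hskew, hskew]; ring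
    have h1 : B (J x) y = - B x (J y) := hskew x y
    simp only [hQdef, hPdef, LinearMap.add_apply, LinearMap.sub_apply, LinearMap.smul_apply,
      Module.End.one_apply, pow_two, Module.End.mul_apply, map_add, map_sub, map_smul,
      LinearMap.add_apply, LinearMap.smul_apply, smul_eq_mul]
    rw [h2, h1]
    ring
  have hQPk : ∀ n : ℕ, ∀ x y, B ((Q ^ n) x) y = B x ((P ^ n) y) := by
    intro n
    induction n with
    | zero => intro x y; simp
    | succ n ih =>
      intro x y
      rw [pow_succ, Module.End.mul_apply, ih, hQP, ← Module.End.mul_apply, ← pow_succ']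
  -- Bezout identity
  have h2a : (2:ℝ[X]) * C a = C (2*a) := by rw [C_mul, map_ofNat]
  have hp : aeval J ((X:ℝ[X])^2 - 2 * C a * X + C c) = P := by
    rw [h2a]
    simp only [map_add, map_sub, map_mul, map_pow, aeval_X, aeval_C]
    simp [hPdef, Algebra.algebraMap_eq_smul_one, smul_one_mul, smul_smul, mul_comm]
  have hq : aeval J ((X:ℝ[X])^2 + 2 * C a * X + C c) = Q := by
    rw [h2a]
    simp only [map_add, map_sub, map_mul, map_pow, aeval_X, aeval_C]
    simp [hQdef, Algebra.algebraMap_eq_smul_one, smul_one_mul, smul_smul, mul_comm]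
  obtain ⟨s, t, hst⟩ := (copr_aux a c ha hc).pow (m := k) (n := k)
  have hbez : aeval J s * P ^ k + aeval J t * Q ^ k = 1 := by
    have := congrArg (aeval J) hst
    simpa [map_add, map_mul, map_pow, hp, hq] using this
  -- commuting t(J) past Q^k
  have hcomm : aeval J t * Q ^ k = Q ^ k * aeval J t := by
    rw [← hq, ← map_pow, ← map_mul, ← map_mul, mul_comm]
  have hv1 : (aeval J s * P ^ k + aeval J t * Q ^ k) v = v := by rw [hbez]; rfl
  calc B u v = B u ((aeval J s * P ^ k + aeval J t * Q ^ k) v) := by rw [hv1]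
    _ = B u (aeval J s ((P ^ k) v)) + B u ((Q ^ k) (aeval J t v)) := by
        rw [LinearMap.add_apply, Module.End.mul_apply, hcomm, Module.End.mul_apply, map_add]
    _ = 0 := by
        rw [hv, map_zero, map_zero, hsymm, hQPk, hu]
        simp
end

section
/- Let μ be a nonzero real number. Then the multiplicity of μ as a root of the minimal polynomial of J equals the multiplicity of −μ as a root of the minimal polynomial of J. -/
open Polynomial

private lemma rm_comp_neg_le (p : ℝ[X]) (hq : p.comp (-X) ≠ 0) (μ : ℝ) :
    p.rootMultiplicity (-μ) ≤ (p.comp (-X)).rootMultiplicity μ := by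
  rw [le_rootMultiplicity_iff hq]
  obtain ⟨c, hc⟩ := pow_rootMultiplicity_dvd p (-μ)
  have h0 : p.comp (-X) = ((X - C (-μ)) ^ p.rootMultiplicity (-μ)).comp (-X) * c.comp (-X) := by
    rw [← mul_comp, ← hc]
  rw [h0, pow_comp, sub_comp, X_comp, C_comp]
  have h1 : (-X - C (-μ) : ℝ[X]) = -(X - C μ) := by
    rw [map_neg]; ring
  rw [h1, neg_pow]
  exact Dvd.dvd.mul_right (Dvd.dvd.mul_left dvd_rfl _) _

private lemma rm_comp_neg (p : ℝ[X]) (hp : p ≠ 0) (μ : ℝ) :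
    (p.comp (-X)).rootMultiplicity μ = p.rootMultiplicity (-μ) := by
  have hcc : (p.comp (-X)).comp (-X) = p := by
    rw [comp_assoc, neg_comp, X_comp, neg_neg, comp_X]
  have hq : p.comp (-X) ≠ 0 := fun h => hp (by rw [← hcc, h, zero_comp])
  refine le_antisymm ?_ (rm_comp_neg_le p hq μ)
  have := rm_comp_neg_le (p.comp (-X)) (by rwa [hcc]) (-μ)
  rwa [neg_neg, hcc] at this

/-- Stmt 3: For nonzero μ, the multiplicities of μ and −μ as roots of the minimal
polynomial of a skewadjoint J coincide. -/
theorem stmt_3 {V : Type*} [AddCommGroup V] [Module ℝ V] [FiniteDimensional ℝ V]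
    (B : LinearMap.BilinForm ℝ V) (hsymm : ∀ x y, B x y = B y x)
    (hnd : B.Nondegenerate)
    (J : Module.End ℝ V) (hskew : ∀ x y, B (J x) y = - B x (J y))
    (μ : ℝ) (hμ : μ ≠ 0) :
    (minpoly ℝ J).rootMultiplicity μ = (minpoly ℝ J).rootMultiplicity (-μ) := by
  -- annihilation transfer : if K is skewadjoint and p(K) = 0 then p(-K) = 0
  have hzero : ∀ (K : Module.End ℝ V),
      (∀ x y, B (K x) y = - B x (K y)) → ∀ (p : ℝ[X]),
      Polynomial.aeval K p = 0 → Polynomial.aeval (-K) p = 0 := by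
    intro K hK p hp
    have hpowK : ∀ (n : ℕ) (x y : V), B ((K ^ n) x) y = B x (((-K) ^ n) y) := by
      intro n
      induction n with
      | zero => intro x y; simp
      | succ n ih =>
        intro x y
        rw [pow_succ, pow_succ', Module.End.mul_apply, Module.End.mul_apply, ih, hK]
        simp
    have hpolyK : ∀ (r : ℝ[X]) (x y : V),
        B ((Polynomial.aeval K r) x) y = B x ((Polynomial.aeval (-K) r) y) := by
      intro r
      induction r using Polynomial.induction_on' with
      | add a b ha hb =>
        intro x y; simp [ha, hb]
      | monomial n a =>
        intro x y
        simp [Polynomial.aeval_monomial, Algebra.algebraMap_eq_smul_one,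
          Module.End.mul_apply, hpowK n x y]
    ext y
    apply hnd.1
    intro x
    rw [← hsymm, ← hpolyK p x y, hp]
    simp
  have hskew' : ∀ x y, B ((-J) x) y = - B x ((-J) y) := by
    intro x y; simp [hskew]
  have hint : IsIntegral ℝ J := IsIntegral.of_finite ℝ J
  have hintn : IsIntegral ℝ (-J) := IsIntegral.of_finite ℝ (-J)
  -- minpoly (-J) = minpoly J
  have hmp : minpoly ℝ (-J) = minpoly ℝ J := by
    have h1 : minpoly ℝ J ∣ minpoly ℝ (-J) := by
      apply minpoly.dvd
      have := hzero (-J) hskew' (minpoly ℝ (-J)) (minpoly.aeval ℝ (-J))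
      rwa [neg_neg] at this
    have h2 : minpoly ℝ (-J) ∣ minpoly ℝ J :=
      minpoly.dvd ℝ (-J) (hzero J hskew (minpoly ℝ J) (minpoly.aeval ℝ J))
    exact Polynomial.eq_of_monic_of_associated (minpoly.monic hintn) (minpoly.monic hint)
      (associated_of_dvd_dvd h2 h1)
  set p := minpoly ℝ J with hpdef
  have hpmonic : p.Monic := minpoly.monic hint
  have hp0 : p ≠ 0 := hpmonic.ne_zero
  set q := p.comp (-X) with hqdef
  have hcc : q.comp (-X) = p := by
    rw [hqdef, comp_assoc, neg_comp, X_comp, neg_neg, comp_X]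
  have hq0 : q ≠ 0 := fun h => hp0 (by rw [← hcc, h, zero_comp])
  have haq : Polynomial.aeval J q = 0 := by
    rw [hqdef, Polynomial.aeval_comp]
    simp only [map_neg, Polynomial.aeval_X]
    rw [← hmp]
    exact minpoly.aeval ℝ (-J)
  obtain ⟨c, hc⟩ := minpoly.dvd ℝ J haq
  have hc0 : c ≠ 0 := fun h => hq0 (by rw [hc, h, mul_zero])
  have hdeg : q.natDegree = p.natDegree := by
    rw [hqdef, natDegree_comp]; simp
  have hcdeg : c.natDegree = 0 := by
    have h := Polynomial.natDegree_mul hp0 hc0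
    rw [← hc, hdeg] at h
    omega
  have hrmq : q.rootMultiplicity μ = p.rootMultiplicity μ := by
    obtain ⟨a, ha⟩ := Polynomial.natDegree_eq_zero.mp hcdeg
    rw [hc, ← ha, Polynomial.rootMultiplicity_mul (by rw [ha, ← hc]; exact hq0),
      Polynomial.rootMultiplicity_C, add_zero]
  calc p.rootMultiplicity μ = q.rootMultiplicity μ := hrmq.symm
    _ = p.rootMultiplicity (-μ) := rm_comp_neg p hp0 μ
end

section
/- Let μ be a nonzero real number and let n = dim V. For every nonzero vector u ∈ ker (J − μ·id)^n there exists a vector w ∈ ker (J + μ·id)^n with ⟨u, w⟩ ≠ 0. (Thus the two null subspaces ker (J − μ·id)^n and ker (J + μ·id)^n pair nondegenerately with each other.) -/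
lemma aux_step {V : Type*} [AddCommGroup V] [Module ℝ V]
    (B : LinearMap.BilinForm ℝ V)
    (J : Module.End ℝ V) (hskew : ∀ x y, B (J x) y = - B x (J y))
    (μ : ℝ) (x y : V) :
    B x ((J + μ • 1) y) = - B ((J - μ • 1) x) y := by
  have h1 : (J + μ • 1) y = J y + μ • y := by simp
  have h2 : (J - μ • 1) x = J x - μ • x := by simp
  rw [h1, h2]
  have := hskew x y
  simp only [map_add, map_sub, map_smul, LinearMap.add_apply, LinearMap.sub_apply,
    LinearMap.smul_apply, smul_eq_mul]
  have h3 : B (J x) y = - B x (J y) := hskew x y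
  rw [h3]
  ring

lemma aux_pow {V : Type*} [AddCommGroup V] [Module ℝ V]
    (B : LinearMap.BilinForm ℝ V)
    (J : Module.End ℝ V) (hskew : ∀ x y, B (J x) y = - B x (J y))
    (μ : ℝ) (n : ℕ) (x y : V) :
    B x (((J + μ • 1) ^ n) y) = (-1 : ℝ) ^ n * B (((J - μ • 1) ^ n) x) y := by
  induction n generalizing y with
  | zero => simp
  | succ n ih =>
    have e1 : ((J + μ • 1) ^ (n + 1)) y = ((J + μ • 1) ^ n) ((J + μ • 1) y) := by
      rw [pow_succ]; rfl
    have e2 : ((J - μ • 1) ^ (n + 1)) x = (J - μ • 1) (((J - μ • 1) ^ n) x) := by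
      rw [pow_succ']; rfl
    rw [e1, ih, e2]
    have : B (((J - μ • 1) ^ n) x) ((J + μ • 1) y)
        = - B ((J - μ • 1) (((J - μ • 1) ^ n) x)) y := aux_step B J hskew μ _ _
    rw [this]
    ring

/-- Stmt 4: For nonzero μ and n = dim V, the null subspaces ker (J − μ·id)^n and
ker (J + μ·id)^n pair nondegenerately with each other. -/
theorem stmt_4 {V : Type*} [AddCommGroup V] [Module ℝ V] [FiniteDimensional ℝ V]
    (B : LinearMap.BilinForm ℝ V) (hsymm : ∀ x y, B x y = B y x)
    (hnd : B.Nondegenerate)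
    (J : Module.End ℝ V) (hskew : ∀ x y, B (J x) y = - B x (J y))
    (μ : ℝ) (hμ : μ ≠ 0) :
    ∀ u : V, u ∈ LinearMap.ker ((J - μ • 1) ^ Module.finrank ℝ V) → u ≠ 0 →
      ∃ w ∈ LinearMap.ker ((J + μ • 1) ^ Module.finrank ℝ V), B u w ≠ 0 := by
  intro u hu hu0
  set n := Module.finrank ℝ V with hn
  set f := J + μ • 1 with hf
  by_contra hc
  push_neg at hc
  -- B u vanishes on ker (f^n) and on range (f^n), so B u = 0, contradiction.
  have hrange : ∀ y : V, B u ((f ^ n) y) = 0 := by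
    intro y
    rw [aux_pow B J hskew μ n u y]
    have : ((J - μ • 1) ^ n) u = 0 := hu
    rw [this]
    simp
  -- Codisjointness of ker (f^n) and range (f^n)
  have hcod : Codisjoint (LinearMap.ker (f ^ n)) (LinearMap.range (f ^ n)) := by
    obtain ⟨k, hk⟩ := Filter.eventually_atTop.mp f.eventually_codisjoint_ker_pow_range_pow
    have hm : Codisjoint (LinearMap.ker (f ^ max n k)) (LinearMap.range (f ^ max n k)) :=
      hk _ (le_max_right n k)
    have hker : LinearMap.ker (f ^ max n k) = LinearMap.ker (f ^ n) := by
      exact (Module.End.ker_pow_eq_ker_pow_finrank_of_le (le_max_left n k)).symm ▸ rfl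
    have hrng : LinearMap.range (f ^ max n k) ≤ LinearMap.range (f ^ n) := by
      intro z hz
      obtain ⟨y, hy⟩ := hz
      refine ⟨(f ^ (max n k - n)) y, ?_⟩
      rw [← LinearMap.comp_apply, ← Module.End.mul_eq_comp, ← pow_add,
        Nat.add_sub_cancel' (le_max_left n k), hy]
    exact hm.mono_right hrng |>.mono_left hker.le
  have hBu : ∀ v : V, B u v = 0 := by
    intro v
    have : v ∈ LinearMap.ker (f ^ n) ⊔ LinearMap.range (f ^ n) := by
      rw [codisjoint_iff.mp hcod]; trivial
    obtain ⟨w, hw, z, hz, rfl⟩ := Submodule.mem_sup.mp this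
    obtain ⟨y, rfl⟩ := hz
    rw [map_add, hc w hw, hrange y, add_zero]
  exact hu0 (hnd.1 u (fun v => hBu v))
end

section
/- Let p be the minimal polynomial of J and let d be its degree. Then p(−t) = (−1)^d · p(t) as polynomials; equivalently, p composed with the polynomial −X equals (−1)^d times p. -/
open Polynomial

/-- Stmt 5: The minimal polynomial p of a skewadjoint J satisfies p(−t) = (−1)^deg p · p(t). -/
theorem stmt_5 {V : Type*} [AddCommGroup V] [Module ℝ V] [FiniteDimensional ℝ V]
    (B : LinearMap.BilinForm ℝ V) (hsymm : ∀ x y, B x y = B y x)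
    (hnd : B.Nondegenerate)
    (J : Module.End ℝ V) (hskew : ∀ x y, B (J x) y = - B x (J y)) :
    (minpoly ℝ J).comp (-Polynomial.X) = (-1) ^ (minpoly ℝ J).natDegree • minpoly ℝ J := by
  set p := minpoly ℝ J with hp
  have hint : IsIntegral ℝ J := Algebra.IsIntegral.isIntegral J
  have hmon : p.Monic := minpoly.monic hint
  -- powers: B (J^n x) y = B x ((-J)^n y)
  have hpow : ∀ (n : ℕ) (x y : V), B ((J ^ n) x) y = B x (((-J) ^ n) y) := by
    intro n
    induction n with
    | zero => intro x y; simp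
    | succ n ih =>
      intro x y
      rw [pow_succ, pow_succ']
      have e1 : (J ^ n * J) x = (J ^ n) (J x) := rfl
      rw [e1, ih (J x) y, hskew]
      have e2 : ((-J) * (-J) ^ n) y = -(J (((-J) ^ n) y)) := by
        simp [Module.End.mul_apply]
      rw [e2, map_neg]
  have key : ∀ (q : ℝ[X]) (x y : V), B ((aeval J q) x) y = B x ((aeval (-J) q) y) := by
    intro q
    induction q using Polynomial.induction_on' with
    | add f g hf hg =>
      intro x y; simp only [map_add, LinearMap.add_apply, map_add, LinearMap.BilinForm.add_left,
        LinearMap.BilinForm.add_right, hf, hg]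
    | monomial n a =>
      intro x y
      simp only [aeval_monomial, Module.End.mul_apply]
      have h1 : (algebraMap ℝ (Module.End ℝ V) a) ((J ^ n) x) = a • ((J ^ n) x) := by
        simp [Algebra.algebraMap_eq_smul_one]
      have h2 : (algebraMap ℝ (Module.End ℝ V) a) (((-J) ^ n) y) = a • (((-J) ^ n) y) := by
        simp [Algebra.algebraMap_eq_smul_one]
      rw [h1, h2, map_smul, LinearMap.smul_apply, map_smul, hpow n x y]
  -- aeval (-J) p = 0
  have hz : aeval (-J) p = 0 := by
    apply LinearMap.ext; intro y
    apply hnd.1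
    intro x
    rw [← hsymm, ← key, minpoly.aeval]
    simp
  set d := p.natDegree with hd
  have hdeg : (p.comp (-X)).natDegree = d := by
    rw [natDegree_comp]; simp; rfl
  have hlc : (p.comp (-X)).leadingCoeff = (-1) ^ d := by
    rw [leadingCoeff_comp (by simp)]
    simp [hmon.leadingCoeff]; rfl
  have hc2 : ((-1 : ℝ) ^ d) * ((-1 : ℝ) ^ d) = 1 := by
    rw [← pow_add, ← two_mul, pow_mul]; norm_num
  set q : ℝ[X] := C ((-1 : ℝ) ^ d) * p.comp (-X) with hq
  have hC0 : ((-1 : ℝ) ^ d) ≠ 0 := by positivity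
  have hqmon : q.Monic := by
    have : q.leadingCoeff = 1 := by
      rw [hq, leadingCoeff_mul, leadingCoeff_C, hlc, hc2]
    exact this
  have hqz : aeval J q = 0 := by
    rw [hq, map_mul, aeval_comp]
    simp [hz]
  have hdvd : p ∣ q := minpoly.dvd ℝ J hqz
  have hqdeg : q.natDegree = d := by
    rw [hq, natDegree_C_mul hC0, hdeg]
  have hqp : p = q := Polynomial.eq_of_dvd_of_natDegree_le_of_leadingCoeff hdvd
    (le_of_eq (hqdeg.trans hd.symm ▸ hqdeg)) (by rw [hmon.leadingCoeff, hqmon.leadingCoeff])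
  have hfin : p.comp (-X) = C ((-1 : ℝ) ^ d) * p := by
    have : C ((-1 : ℝ) ^ d) * p = C ((-1 : ℝ) ^ d) * (C ((-1 : ℝ) ^ d) * p.comp (-X)) := by
      rw [← hq, ← hqp]
    rw [this, ← mul_assoc, ← C_mul, hc2]
    simp
  show p.comp (-X) = ((-1 : ℤ)) ^ d • p
  rw [zsmul_eq_mul, hfin]
  simp only [map_pow, map_neg, map_one, Int.cast_pow, Int.cast_neg, Int.cast_one]
end

section
/- Let μ₁, μ₂ be real numbers with μ₁ + μ₂ ≠ 0, and let a, b be positive integers. If u ∈ ker (J − μ₁·id)^a and v ∈ ker (J − μ₂·id)^b, then ⟨u, v⟩ = 0. -/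
theorem stmt6_aux {V : Type*} [AddCommGroup V] [Module ℝ V]
    (B : LinearMap.BilinForm ℝ V)
    (J : Module.End ℝ V) (hskew : ∀ x y, B (J x) y = - B x (J y))
    (μ₁ μ₂ : ℝ) (hμ : μ₁ + μ₂ ≠ 0) :
    ∀ n a b : ℕ, a + b ≤ n → ∀ u v : V, u ∈ LinearMap.ker ((J - μ₁ • 1) ^ a) →
      v ∈ LinearMap.ker ((J - μ₂ • 1) ^ b) → B u v = 0 := by
  intro n
  induction n with
  | zero =>
    intro a b hab u v hu hv
    obtain ⟨rfl, rfl⟩ : a = 0 ∧ b = 0 := by omega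
    simp only [pow_zero, LinearMap.mem_ker, Module.End.one_apply] at hu
    simp [hu]
  | succ n ih =>
    intro a b hab u v hu hv
    match a, b with
    | 0, b =>
      simp only [pow_zero, LinearMap.mem_ker, Module.End.one_apply] at hu
      simp [hu]
    | a, 0 =>
      simp only [pow_zero, LinearMap.mem_ker, Module.End.one_apply] at hv
      simp [hv]
    | a+1, b+1 =>
      have hu' : (J - μ₁ • 1) u ∈ LinearMap.ker ((J - μ₁ • 1) ^ a) := by
        rw [LinearMap.mem_ker, ← Module.End.mul_apply, ← pow_succ]
        exact hu
      have hv' : (J - μ₂ • 1) v ∈ LinearMap.ker ((J - μ₂ • 1) ^ b) := by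
        rw [LinearMap.mem_ker, ← Module.End.mul_apply, ← pow_succ]
        exact hv
      have h1 : B ((J - μ₁ • 1) u) v = 0 := ih a (b+1) (by omega) _ _ hu' hv
      have h2 : B u ((J - μ₂ • 1) v) = 0 := ih (a+1) b (by omega) _ _ hu hv'
      have key : B ((J - μ₁ • 1) u) v + B u ((J - μ₂ • 1) v) = -(μ₁ + μ₂) * B u v := by
        simp only [LinearMap.sub_apply, LinearMap.smul_apply, Module.End.one_apply,
          map_sub, LinearMap.sub_apply, map_smul, LinearMap.smul_apply, hskew u v,
          smul_eq_mul]
        ring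
      have h0 : (-(μ₁ + μ₂)) * B u v = 0 := by rw [← key, h1, h2, add_zero]
      rcases mul_eq_zero.mp h0 with h | h
      · exact absurd (by linarith) hμ
      · exact h

/-- Stmt 6: Generalized eigenspaces of a skewadjoint J for μ₁, μ₂ with μ₁ + μ₂ ≠ 0
are orthogonal. -/
theorem stmt_6 {V : Type*} [AddCommGroup V] [Module ℝ V] [FiniteDimensional ℝ V]
    (B : LinearMap.BilinForm ℝ V) (hsymm : ∀ x y, B x y = B y x)
    (hnd : B.Nondegenerate)
    (J : Module.End ℝ V) (hskew : ∀ x y, B (J x) y = - B x (J y))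
    (μ₁ μ₂ : ℝ) (hμ : μ₁ + μ₂ ≠ 0) (a b : ℕ) (ha : 0 < a) (hb : 0 < b) :
    ∀ u v : V, u ∈ LinearMap.ker ((J - μ₁ • 1) ^ a) →
      v ∈ LinearMap.ker ((J - μ₂ • 1) ^ b) → B u v = 0 := by
  intro u v hu hv
  exact stmt6_aux B J hskew μ₁ μ₂ hμ (a+b) a b le_rfl u v hu hv
end

section
/- Let λ be a positive real number, μ any real number, and a, b positive integers. If u ∈ ker (J² + λ²·id)^a and v ∈ ker (J − μ·id)^b, then ⟨u, v⟩ = 0. -/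
open Polynomial

/-- Stmt 8: For positive λ and any real μ, ker (J² + λ²·id)^a and ker (J − μ·id)^b
are orthogonal. -/
theorem stmt_8 {V : Type*} [AddCommGroup V] [Module ℝ V] [FiniteDimensional ℝ V]
    (B : LinearMap.BilinForm ℝ V) (hsymm : ∀ x y, B x y = B y x)
    (hnd : B.Nondegenerate)
    (J : Module.End ℝ V) (hskew : ∀ x y, B (J x) y = - B x (J y))
    (l : ℝ) (hl : 0 < l) (μ : ℝ) (a b : ℕ) (ha : 0 < a) (hb : 0 < b) :
    ∀ u v : V, u ∈ LinearMap.ker ((J ^ 2 + l ^ 2 • 1) ^ a) →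
      v ∈ LinearMap.ker ((J - μ • 1) ^ b) → B u v = 0 := by
  intro u v hu hv
  rw [LinearMap.mem_ker] at hu hv
  -- skew step
  have hstep : ∀ x y : V, B ((J + μ • 1) x) y = - B x ((J - μ • 1) y) := by
    intro x y
    simp only [LinearMap.add_apply, LinearMap.sub_apply, LinearMap.smul_apply,
      Module.End.one_apply, map_add, map_sub, map_smul, LinearMap.add_apply,
      LinearMap.sub_apply, smul_eq_mul, hskew]
    ring
  have hpow : ∀ n : ℕ, ∀ x y : V,
      B (((J + μ • 1) ^ n) x) y = (-1 : ℝ) ^ n * B x (((J - μ • 1) ^ n) y) := by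
    intro n
    induction n with
    | zero => intro x y; simp
    | succ n ih =>
      intro x y
      have h1 : ((J + μ • 1) ^ (n + 1)) x = ((J + μ • 1) ^ n) ((J + μ • 1) x) := by
        rw [pow_succ]; rfl
      have h2 : (J - μ • 1) (((J - μ • 1) ^ n) y) = ((J - μ • 1) ^ (n + 1)) y := by
        rw [pow_succ']; rfl
      rw [h1, ih, hstep, h2]
      ring
  -- coprimality
  have hirr : Irreducible (X + C μ : ℝ[X]) := by
    have h : (X + C μ : ℝ[X]) = X - C (-μ) := by simp [sub_eq_add_neg]
    rw [h]; exact irreducible_X_sub_C (-μ)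
  have hcop1 : IsCoprime ((X + C μ : ℝ[X])) (X ^ 2 + C (l ^ 2)) := by
    rcases hirr.isCoprime_or_dvd (X ^ 2 + C (l ^ 2)) with h | h
    · exact h
    · exfalso
      have h' : (X - C (-μ) : ℝ[X]) ∣ (X ^ 2 + C (l ^ 2)) := by
        simpa [sub_eq_add_neg] using h
      rw [dvd_iff_isRoot] at h'
      have : (-μ) ^ 2 + l ^ 2 = 0 := by simpa [IsRoot] using h'
      nlinarith
  obtain ⟨f, g, hfg⟩ := (hcop1.symm.pow (m := a) (n := b))
  -- apply aeval J
  have haevalP : Polynomial.aeval J ((X ^ 2 + C (l ^ 2) : ℝ[X]) ^ a)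
      = (J ^ 2 + l ^ 2 • 1) ^ a := by
    simp [Module.algebraMap_end_eq_smul_id, _root_.smul_pow, ← Module.End.one_eq_id]
  have haevalQ : Polynomial.aeval J ((X + C μ : ℝ[X]) ^ b) = (J + μ • 1) ^ b := by
    simp [Module.algebraMap_end_eq_smul_id, ← Module.End.one_eq_id]
  have hu2 : u = ((J + μ • 1) ^ b) ((Polynomial.aeval J g) u) := by
    have h1 : (Polynomial.aeval J)
        (f * (X ^ 2 + C (l ^ 2)) ^ a + g * (X + C μ) ^ b) u = u := by
      rw [hfg]; simp
    rw [map_add, map_mul, map_mul, LinearMap.add_apply] at h1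
    rw [Module.End.mul_apply, haevalP, hu, map_zero, zero_add] at h1
    rw [Module.End.mul_apply] at h1
    have hcomm : (Polynomial.aeval J g) (((Polynomial.aeval J) ((X + C μ : ℝ[X]) ^ b)) u)
        = ((Polynomial.aeval J) ((X + C μ : ℝ[X]) ^ b)) ((Polynomial.aeval J g) u) := by
      rw [← Module.End.mul_apply, ← Module.End.mul_apply, ← map_mul, ← map_mul, mul_comm]
    rw [hcomm, haevalQ] at h1
    exact h1.symm
  calc B u v = B (((J + μ • 1) ^ b) ((Polynomial.aeval J g) u)) v := by rw [← hu2]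
    _ = (-1 : ℝ) ^ b * B ((Polynomial.aeval J g) u) (((J - μ • 1) ^ b) v) := hpow b _ _
    _ = 0 := by rw [hv]; simp
end

section
/- Let λ be a positive real number and n = dim V. Then the form ⟨·,·⟩ is nondegenerate on the subspace ker (J² + λ²·id)^n: for every nonzero u ∈ ker (J² + λ²·id)^n there exists w ∈ ker (J² + λ²·id)^n with ⟨u, w⟩ ≠ 0. -/
/-- Stmt 9: For positive λ and n = dim V, the form B is nondegenerate on
ker (J² + λ²·id)^n. -/
theorem stmt_9 {V : Type*} [AddCommGroup V] [Module ℝ V] [FiniteDimensional ℝ V]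
    (B : LinearMap.BilinForm ℝ V) (hsymm : ∀ x y, B x y = B y x)
    (hnd : B.Nondegenerate)
    (J : Module.End ℝ V) (hskew : ∀ x y, B (J x) y = - B x (J y))
    (l : ℝ) (hl : 0 < l) :
    ∀ u : V, u ∈ LinearMap.ker ((J ^ 2 + l ^ 2 • 1) ^ Module.finrank ℝ V) → u ≠ 0 →
      ∃ w ∈ LinearMap.ker ((J ^ 2 + l ^ 2 • 1) ^ Module.finrank ℝ V), B u w ≠ 0 := by
  intro u hu hu0
  set f : Module.End ℝ V := J ^ 2 + l ^ 2 • 1 with hf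
  set n : ℕ := Module.finrank ℝ V with hn
  -- f is selfadjoint
  have hsa : ∀ x y, B (f x) y = B x (f y) := by
    intro x y
    simp only [hf, LinearMap.add_apply, LinearMap.smul_apply, Module.End.one_apply,
      pow_two, Module.End.mul_apply, map_add, map_smul, LinearMap.add_apply,
      LinearMap.smul_apply]
    rw [hskew (J x) y, hskew x (J y)]
    ring_nf
  have hsapow : ∀ (k : ℕ) (x y : V), B ((f ^ k) x) y = B x ((f ^ k) y) := by
    intro k
    induction k with
    | zero => simp
    | succ m ih =>
      intro x y
      have hc : ∀ z : V, f ((f ^ m) z) = (f ^ m) (f z) := fun z => by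
        rw [← Module.End.mul_apply, ← Module.End.mul_apply, ← pow_succ', ← pow_succ]
      rw [pow_succ, Module.End.mul_apply, Module.End.mul_apply, ih, ← hc, hsa, hc]
  -- Fitting decomposition at some large N
  obtain ⟨N₀, hN₀⟩ := Filter.eventually_atTop.mp f.eventually_isCompl_ker_pow_range_pow
  set N : ℕ := max N₀ n with hN
  have hcompl : IsCompl (LinearMap.ker (f ^ N)) (LinearMap.range (f ^ N)) :=
    hN₀ N (le_max_left _ _)
  have hkerN : LinearMap.ker (f ^ N) = LinearMap.ker (f ^ n) :=
    Module.End.ker_pow_eq_ker_pow_finrank_of_le (le_max_right _ _)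
  by_contra hcon
  push_neg at hcon
  apply hu0
  apply hnd.1 u
  intro v
  have hsup : LinearMap.ker (f ^ N) ⊔ LinearMap.range (f ^ N) = ⊤ :=
    codisjoint_iff.mp hcompl.codisjoint
  have hv : v ∈ LinearMap.ker (f ^ N) ⊔ LinearMap.range (f ^ N) := by
    rw [hsup]; trivial
  obtain ⟨k, hk, w, hw, rfl⟩ := Submodule.mem_sup.mp hv
  obtain ⟨r, rfl⟩ := hw
  have h1 : B u k = 0 := hcon k (hkerN ▸ hk)
  have hufN : (f ^ N) u = 0 := by
    have : u ∈ LinearMap.ker (f ^ N) := hkerN ▸ hu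
    exact this
  have h2 : B u ((f ^ N) r) = 0 := by
    rw [← hsapow, hufN]; simp
  simp [map_add, h1, h2]
end

section
/- Let n = dim V. Then the form ⟨·,·⟩ is nondegenerate on the subspace ker J^n: for every nonzero u ∈ ker J^n there exists w ∈ ker J^n with ⟨u, w⟩ ≠ 0. -/
/-- Stmt 10: For n = dim V, the form B is nondegenerate on ker J^n. -/
theorem stmt_10 {V : Type*} [AddCommGroup V] [Module ℝ V] [FiniteDimensional ℝ V]
    (B : LinearMap.BilinForm ℝ V) (hsymm : ∀ x y, B x y = B y x)
    (hnd : B.Nondegenerate)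
    (J : Module.End ℝ V) (hskew : ∀ x y, B (J x) y = - B x (J y)) :
    ∀ u : V, u ∈ LinearMap.ker (J ^ Module.finrank ℝ V) → u ≠ 0 →
      ∃ w ∈ LinearMap.ker (J ^ Module.finrank ℝ V), B u w ≠ 0 := by
  set n := Module.finrank ℝ V with hn
  -- key: B (J^k x) y = (-1)^k * B x (J^k y)
  have key : ∀ (k : ℕ) (x y : V), B ((J ^ k) x) y = (-1 : ℝ) ^ k * B x ((J ^ k) y) := by
    intro k
    induction k with
    | zero => simp
    | succ k ih =>
      intro x y
      rw [pow_succ, pow_succ]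
      simp only [Module.End.mul_apply]
      rw [ih (J x) y, hskew]
      have hc : J ((J ^ k) y) = (J ^ k) (J y) := by
        rw [← Module.End.mul_apply, ← pow_succ', pow_succ, Module.End.mul_apply]
      rw [hc]
      ring
  -- ker J^n ∩ range J^n = 0
  have hdisj : Disjoint (LinearMap.ker (J ^ n)) (LinearMap.range (J ^ n)) := by
    rw [disjoint_iff]
    ext x
    simp only [Submodule.mem_inf, LinearMap.mem_ker, LinearMap.mem_range,
      Submodule.mem_bot]
    constructor
    · rintro ⟨hk, y, rfl⟩
      have h2n : y ∈ LinearMap.ker (J ^ (n + n)) := by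
        rw [LinearMap.mem_ker, pow_add, Module.End.mul_apply, hk]
      rw [Module.End.ker_pow_eq_ker_pow_finrank_of_le (by omega), ← hn,
        LinearMap.mem_ker] at h2n
      simp [h2n]
    · rintro rfl
      exact ⟨map_zero _, 0, map_zero _⟩
  have hsum : LinearMap.ker (J ^ n) ⊔ LinearMap.range (J ^ n) = ⊤ := by
    apply Submodule.eq_top_of_disjoint _ _ _ hdisj
    rw [add_comm]
    exact (LinearMap.finrank_range_add_finrank_ker (J ^ n)).ge
  intro u hu hu0
  by_contra hcon
  push_neg at hcon
  apply hu0
  apply hnd.1 u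
  intro z
  have hz : z ∈ LinearMap.ker (J ^ n) ⊔ LinearMap.range (J ^ n) := hsum ▸ Submodule.mem_top
  obtain ⟨w, hw, x, hx, rfl⟩ := Submodule.mem_sup.mp hz
  obtain ⟨v, rfl⟩ := hx
  have h1 : B u ((J ^ n) v) = 0 := by
    rw [hsymm, key, LinearMap.mem_ker.mp hu]
    simp
  rw [map_add, h1, add_zero]
  exact hcon w hw
end

section
/- Let μ be a nonzero real number and n = dim V. Then the form ⟨·,·⟩ is nondegenerate on the subspace W = ker (J − μ·id)^n + ker (J + μ·id)^n: for every nonzero u ∈ W there exists w ∈ W with ⟨u, w⟩ ≠ 0. -/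
open LinearMap Polynomial

/-- Stmt 11: For nonzero μ and n = dim V, B is nondegenerate on
ker (J − μ·id)^n + ker (J + μ·id)^n. -/
theorem stmt_11 {V : Type*} [AddCommGroup V] [Module ℝ V] [FiniteDimensional ℝ V]
    (B : LinearMap.BilinForm ℝ V) (hsymm : ∀ x y, B x y = B y x)
    (hnd : B.Nondegenerate)
    (J : Module.End ℝ V) (hskew : ∀ x y, B (J x) y = - B x (J y))
    (μ : ℝ) (hμ : μ ≠ 0) :
    ∀ u : V, u ∈ LinearMap.ker ((J - μ • 1) ^ Module.finrank ℝ V) ⊔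
        LinearMap.ker ((J + μ • 1) ^ Module.finrank ℝ V) → u ≠ 0 →
      ∃ w ∈ LinearMap.ker ((J - μ • 1) ^ Module.finrank ℝ V) ⊔
        LinearMap.ker ((J + μ • 1) ^ Module.finrank ℝ V), B u w ≠ 0 := by
  set n := Module.finrank ℝ V with hn
  set P : Module.End ℝ V := J - μ • 1 with hP
  set Q : Module.End ℝ V := J + μ • 1 with hQ
  have hs : Commute J ((μ : ℝ) • (1 : Module.End ℝ V)) := (Commute.one_right J).smul_right μ
  have hc : Commute P Q :=
    (((Commute.refl J).add_right hs).sub_left ((hs.symm.add_right (Commute.refl _))))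
  set g : Module.End ℝ V := P * Q with hg
  have hgPQ : g ^ n = P ^ n * Q ^ n := hc.mul_pow n
  have hgQP : g ^ n = Q ^ n * P ^ n := by rw [hc.eq] at hg; rw [hg, hc.symm.mul_pow]
  -- g x = J (J x) - (μ*μ) • x
  have hg_apply : ∀ x, g x = J (J x) - (μ * μ) • x := by
    intro x
    simp [hg, hP, hQ, Module.End.mul_apply, map_add, map_smul, smul_smul,
      LinearMap.sub_apply, LinearMap.add_apply, LinearMap.smul_apply, Module.End.one_apply]
    module
  have key : ∀ x y, B (g x) y = B x (g y) := by
    intro x y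
    have h1 : B (J (J x)) y = B x (J (J y)) := by rw [hskew, hskew, neg_neg]
    rw [hg_apply x, hg_apply y]
    simp [map_sub, map_smul, h1]
  have keyn : ∀ m : ℕ, ∀ x y, B ((g ^ m) x) y = B x ((g ^ m) y) := by
    intro m
    induction m with
    | zero => simp
    | succ k ih =>
      intro x y
      have hgg : g * g ^ k = g ^ k * g := by rw [← pow_succ', pow_succ]
      rw [pow_succ', Module.End.mul_apply g (g ^ k) x, Module.End.mul_apply g (g ^ k) y,
        key, ih, ← Module.End.mul_apply (g ^ k) g y, ← Module.End.mul_apply g (g ^ k) y, hgg]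
  set W := LinearMap.ker (P ^ n) ⊔ LinearMap.ker (Q ^ n) with hW
  have hWle : W ≤ LinearMap.ker (g ^ n) := by
    apply sup_le
    · rw [hgQP, Module.End.mul_eq_comp]
      exact LinearMap.ker_le_ker_comp _ _
    · rw [hgPQ, Module.End.mul_eq_comp]
      exact LinearMap.ker_le_ker_comp _ _
  -- coprimality: ker g^n ≤ W
  have haeP : Polynomial.aeval J ((X - C μ) ^ n) = P ^ n := by
    simp [hP, map_pow, Algebra.algebraMap_eq_smul_one]
  have haeQ : Polynomial.aeval J ((X + C μ) ^ n) = Q ^ n := by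
    simp [hQ, map_pow, Algebra.algebraMap_eq_smul_one]
  have hcop : IsCoprime ((X - C μ) ^ n : ℝ[X]) ((X + C μ) ^ n) := by
    apply IsCoprime.pow
    have : (X + C μ : ℝ[X]) = X - C (-μ) := by simp [sub_neg_eq_add]
    rw [this]
    exact isCoprime_X_sub_C_of_isUnit_sub (isUnit_iff_ne_zero.mpr
      (by simpa [sub_neg_eq_add, two_mul] using mul_ne_zero (two_ne_zero (α := ℝ)) hμ))
  obtain ⟨a, b, hab⟩ := hcop
  have hkerW : LinearMap.ker (g ^ n) ≤ W := by
    intro v hv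
    have hv' : (g ^ n) v = 0 := hv
    have h1 : v = (Polynomial.aeval J a) ((P ^ n) v) + (Polynomial.aeval J b) ((Q ^ n) v) := by
      have h2 := congrArg (fun p : ℝ[X] => (Polynomial.aeval J p) v) hab
      simpa [map_add, map_mul, Module.End.mul_apply, haeP, haeQ, LinearMap.add_apply]
        using h2.symm
    have hx : (Polynomial.aeval J a) ((P ^ n) v) ∈ LinearMap.ker (Q ^ n) := by
      have hcom : Q ^ n * Polynomial.aeval J a = Polynomial.aeval J a * Q ^ n := by
        rw [← haeQ, ← map_mul, ← map_mul, mul_comm]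
      have h0 : (Q ^ n) ((P ^ n) v) = 0 := by
        rw [← Module.End.mul_apply, ← hgQP]; exact hv'
      rw [LinearMap.mem_ker, ← Module.End.mul_apply, hcom, Module.End.mul_apply, h0, map_zero]
    have hy : (Polynomial.aeval J b) ((Q ^ n) v) ∈ LinearMap.ker (P ^ n) := by
      have hcom : P ^ n * Polynomial.aeval J b = Polynomial.aeval J b * P ^ n := by
        rw [← haeP, ← map_mul, ← map_mul, mul_comm]
      have h0 : (P ^ n) ((Q ^ n) v) = 0 := by
        rw [← Module.End.mul_apply, ← hgPQ]; exact hv'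
      rw [LinearMap.mem_ker, ← Module.End.mul_apply, hcom, Module.End.mul_apply, h0, map_zero]
    rw [h1]
    exact Submodule.add_mem _ (Submodule.mem_sup_right hx) (Submodule.mem_sup_left hy)
  have hcod : LinearMap.ker (g ^ n) ⊔ LinearMap.range (g ^ n) = ⊤ := by
    obtain ⟨k, hk⟩ := Filter.eventually_atTop.mp g.eventually_isCompl_ker_pow_range_pow
    have h1 := (hk (max k n) (le_max_left _ _)).sup_eq_top
    have hker : LinearMap.ker (g ^ max k n) = LinearMap.ker (g ^ n) := by
      rw [hn]
      exact Module.End.ker_pow_eq_ker_pow_finrank_of_le (hn ▸ le_max_right k n)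
    have hrange : LinearMap.range (g ^ max k n) ≤ LinearMap.range (g ^ n) := by
      have hmn : g ^ max k n = g ^ n * g ^ (max k n - n) := by
        rw [← pow_add, Nat.add_sub_cancel' (le_max_right _ _)]
      rw [hmn, Module.End.mul_eq_comp]
      exact LinearMap.range_comp_le_range _ _
    rw [hker] at h1
    exact eq_top_iff.mpr (h1 ▸ sup_le_sup_left hrange _)
  intro u hu hu0
  have hgu : (g ^ n) u = 0 := hWle hu
  obtain ⟨v, hv⟩ : ∃ v, B u v ≠ 0 := by
    by_contra h
    push_neg at h
    exact hu0 (hnd.1 u h)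
  have hvmem : v ∈ LinearMap.ker (g ^ n) ⊔ LinearMap.range (g ^ n) := hcod ▸ Submodule.mem_top
  obtain ⟨w, hw, z, hz, hwz⟩ := Submodule.mem_sup.mp hvmem
  obtain ⟨r, hr⟩ := hz
  refine ⟨w, hkerW hw, ?_⟩
  intro hBw
  apply hv
  have hz0 : B u z = 0 := by rw [← hr, ← keyn n u r, hgu, map_zero, LinearMap.zero_apply]
  rw [← hwz, map_add, hBw, hz0, add_zero]
end

section
/- Let λ be a positive real number and l a positive integer, and suppose the minimal polynomial of J equals (X² + λ²)^l. Then there exists a vector v ∈ V such that the vectors v, (J² + λ²·id)v, ..., (J² + λ²·id)^{l−1}v are linearly independent and ⟨v, (J² + λ²·id)^{l−1}v⟩ ≠ 0. -/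
open Polynomial

/-- Stmt 14: If the minimal polynomial of J is (X² + λ²)^l, there is a vector v with
v, (J²+λ²)v, …, (J²+λ²)^{l−1}v linearly independent and ⟨v, (J²+λ²)^{l−1}v⟩ ≠ 0. -/
theorem stmt_14 {V : Type*} [AddCommGroup V] [Module ℝ V] [FiniteDimensional ℝ V]
    (B : LinearMap.BilinForm ℝ V) (hsymm : ∀ x y, B x y = B y x)
    (hnd : B.Nondegenerate)
    (J : Module.End ℝ V) (hskew : ∀ x y, B (J x) y = - B x (J y))
    (lam : ℝ) (hlam : 0 < lam) (l : ℕ) (hl : 0 < l)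
    (hmin : minpoly ℝ J = (Polynomial.X ^ 2 + Polynomial.C (lam ^ 2)) ^ l) :
    ∃ v : V,
      LinearIndependent ℝ
        (fun i : Fin l => (((J ^ 2 + lam ^ 2 • 1 : Module.End ℝ V) ^ (i : ℕ)) v)) ∧
      B v ((((J ^ 2 + lam ^ 2 • 1 : Module.End ℝ V) ^ (l - 1))) v) ≠ 0 := by
  set A : Module.End ℝ V := J ^ 2 + lam ^ 2 • 1 with hA
  have hAeval : A = Polynomial.aeval J (X ^ 2 + C (lam ^ 2)) := by
    rw [map_add, map_pow, aeval_X, aeval_C, Algebra.algebraMap_eq_smul_one]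
  have hApow : ∀ k, A ^ k = Polynomial.aeval J ((X ^ 2 + C (lam ^ 2)) ^ k) := by
    intro k; rw [hAeval, ← map_pow]
  have hAl : A ^ l = 0 := by
    rw [hApow, ← hmin, minpoly.aeval]
  have hAl1 : A ^ (l - 1) ≠ 0 := by
    intro h
    have hdvd : minpoly ℝ J ∣ (X ^ 2 + C (lam ^ 2)) ^ (l - 1) :=
      minpoly.dvd _ _ (by rw [← hApow, h])
    have hmono : (X ^ 2 + C (lam ^ 2) : ℝ[X]).Monic := by
      apply Polynomial.monic_X_pow_add_C
      norm_num
    have hne : ((X ^ 2 + C (lam ^ 2) : ℝ[X]) ^ (l - 1)) ≠ 0 := (hmono.pow _).ne_zero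
    have hle := Polynomial.natDegree_le_of_dvd hdvd hne
    rw [hmin] at hle
    rw [Polynomial.natDegree_pow, Polynomial.natDegree_pow,
      Polynomial.natDegree_X_pow_add_C] at hle
    omega
  have hself : ∀ x y, B (A x) y = B x (A y) := by
    intro x y
    have h1 : B (J (J x)) y = B x (J (J y)) := by
      rw [hskew, hskew, neg_neg]
    have hAx : ∀ z : V, A z = J (J z) + lam ^ 2 • z := by
      intro z
      simp [hA, pow_two, Module.End.mul_apply]
    rw [hAx, hAx]
    simp only [map_add, map_smul, LinearMap.add_apply, LinearMap.smul_apply, h1]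
  have hselfpow : ∀ (k : ℕ) (x y : V), B ((A ^ k) x) y = B x ((A ^ k) y) := by
    intro k
    induction k with
    | zero => intro x y; simp
    | succ k ih =>
      intro x y
      rw [pow_succ, Module.End.mul_apply, ih, hself, ← Module.End.mul_apply, ← pow_succ', ← pow_succ]
  have hex : ∃ v : V, B v ((A ^ (l - 1)) v) ≠ 0 := by
    by_contra h
    push_neg at h
    apply hAl1
    have key : ∀ a b : V, B a ((A ^ (l - 1)) b) = 0 := by
      intro a b
      have hsym' : B b ((A ^ (l - 1)) a) = B a ((A ^ (l - 1)) b) := by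
        rw [hsymm b, hselfpow]
      have h2 := h (a + b)
      simp only [map_add, LinearMap.add_apply] at h2
      rw [h a, h b, hsym'] at h2
      linarith
    ext y
    simp only [LinearMap.zero_apply]
    apply hnd.1
    intro x
    rw [hsymm]
    exact key x y
  obtain ⟨v, hv⟩ := hex
  refine ⟨v, ?_, hv⟩
  have hAl1v : (A ^ (l - 1)) v ≠ 0 := fun h => hv (by rw [h, map_zero])
  have hApowv : ∀ m, l ≤ m → (A ^ m) v = 0 := by
    intro m hm
    have hsplit : A ^ m = A ^ (m - l) * A ^ l := by rw [← pow_add]; congr 1; omega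
    rw [hsplit, hAl, mul_zero]
    simp
  rw [Fintype.linearIndependent_iff]
  intro g hg
  have key : ∀ n : ℕ, ∀ hn : n < l, g ⟨n, hn⟩ = 0 := by
    intro n
    induction n using Nat.strong_induction_on with
    | _ n ih =>
      intro hn
      have h0 : (A ^ (l - 1 - n)) (∑ i : Fin l, g i • (A ^ (i : ℕ)) v) = 0 := by
        rw [hg]; simp
      rw [map_sum] at h0
      have hterm : ∀ i : Fin l,
          (A ^ (l - 1 - n)) (g i • (A ^ (i : ℕ)) v) = g i • (A ^ (l - 1 - n + i)) v := by
        intro i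
        rw [map_smul, ← Module.End.mul_apply, ← pow_add]
      rw [Finset.sum_congr rfl (fun i _ => hterm i)] at h0
      rw [Finset.sum_eq_single (⟨n, hn⟩ : Fin l)] at h0
      · have hexp : l - 1 - n + n = l - 1 := by omega
        rw [hexp] at h0
        rcases smul_eq_zero.mp h0 with h | h
        · exact h
        · exact absurd h hAl1v
      · intro i _ hi
        have hine : (i : ℕ) ≠ n := fun h => hi (Fin.ext h)
        rcases lt_or_gt_of_ne hine with hlt | hgt
        · have : g i = 0 := by
            have := ih (i : ℕ) hlt i.isLt
            simpa using this
          rw [this, zero_smul]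
        · have : (A ^ (l - 1 - n + (i : ℕ))) v = 0 := hApowv _ (by omega)
          rw [this, smul_zero]
      · intro h
        exact absurd (Finset.mem_univ _) h
  intro i
  have := key i i.isLt
  simpa using this
end

section
/- Let λ be a positive real number and l an odd positive integer, and suppose the minimal polynomial of J equals (X² + λ²)^l. Then there exist vectors u₁, v₁, ..., u_l, v_l in V and a sign ε ∈ {1, −1} such that (with u_{l+1} = v_{l+1} = 0): Ju_h = u_{h+1} − λ·v_h and Jv_h = v_{h+1} + λ·u_h for 1 ≤ h ≤ l; all inner products among these 2l vectors vanish except ⟨u_h, u_j⟩ = ⟨v_h, v_j⟩ = (−1)^j · ε whenever h + j = l + 1; and the 2l vectors are linearly independent, their span is J-invariant, and the form ⟨·,·⟩ is nondegenerate on their span. -/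
namespace Stmt16

variable {V : Type*} [AddCommGroup V] [Module ℝ V]

def jmap : (V × V) →ₗ[ℝ] (V × V) :=
  LinearMap.prod (-(LinearMap.snd ℝ V V)) (LinearMap.fst ℝ V V)
@[simp] lemma jmap_apply (x : V × V) : jmap x = (-x.2, x.1) := rfl
def conjL : (V × V) →ₗ[ℝ] (V × V) :=
  LinearMap.prod (LinearMap.fst ℝ V V) (-(LinearMap.snd ℝ V V))
@[simp] lemma conjL_apply (x : V × V) : conjL x = (x.1, -x.2) := rfl

variable (B : LinearMap.BilinForm ℝ V)

/-- complex extension of B -/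
def Bc (x y : V × V) : ℂ :=
  ⟨B x.1 y.1 - B x.2 y.2, B x.1 y.2 + B x.2 y.1⟩

@[simp] lemma Bc_re (x y : V × V) : (Bc B x y).re = B x.1 y.1 - B x.2 y.2 := rfl
@[simp] lemma Bc_im (x y : V × V) : (Bc B x y).im = B x.1 y.2 + B x.2 y.1 := rfl

/-- scalar multiplication by a complex number -/
def smulC (a : ℂ) (x : V × V) : V × V := a.re • x + a.im • jmap x

lemma smulC_fst (a : ℂ) (x : V × V) : (smulC a x).1 = a.re • x.1 - a.im • x.2 := by
  simp [smulC, sub_eq_add_neg]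
lemma smulC_snd (a : ℂ) (x : V × V) : (smulC a x).2 = a.im • x.1 + a.re • x.2 := by
  simp [smulC, add_comm]

lemma Bc_add_left (x y z : V × V) : Bc B (x + y) z = Bc B x z + Bc B y z := by
  simp [Bc, Complex.ext_iff]; constructor <;> ring
lemma Bc_add_right (x y z : V × V) : Bc B x (y + z) = Bc B x y + Bc B x z := by
  simp [Bc, Complex.ext_iff]; constructor <;> ring
lemma Bc_smul_left (r : ℝ) (x y : V × V) : Bc B (r • x) y = (r : ℂ) * Bc B x y := by
  simp [Bc, Complex.ext_iff]; constructor <;> ring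
lemma Bc_smul_right (r : ℝ) (x y : V × V) : Bc B x (r • y) = (r : ℂ) * Bc B x y := by
  simp [Bc, Complex.ext_iff]; constructor <;> ring
lemma Bc_jmap_left (x y : V × V) : Bc B (jmap x) y = Complex.I * Bc B x y := by
  simp [Bc, Complex.ext_iff]; constructor <;> ring
lemma Bc_jmap_right (x y : V × V) : Bc B x (jmap y) = Complex.I * Bc B x y := by
  simp [Bc, Complex.ext_iff]; constructor <;> ring
lemma Bc_smulC_left (a : ℂ) (x y : V × V) : Bc B (smulC a x) y = a * Bc B x y := by
  rw [smulC, Bc_add_left, Bc_smul_left, Bc_smul_left, Bc_jmap_left]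
  rw [Complex.ext_iff]; simp; ring
lemma Bc_smulC_right (a : ℂ) (x y : V × V) : Bc B x (smulC a y) = a * Bc B x y := by
  rw [smulC, Bc_add_right, Bc_smul_right, Bc_smul_right, Bc_jmap_right]
  rw [Complex.ext_iff]; simp; ring
lemma Bc_symm (hsymm : ∀ x y, B x y = B y x) (x y : V × V) : Bc B x y = Bc B y x := by
  simp [Bc, Complex.ext_iff]; constructor
  · rw [hsymm x.1 y.1, hsymm x.2 y.2]
  · rw [hsymm x.1 y.2, hsymm x.2 y.1]; ring
lemma Bc_conj_conj (x y : V × V) :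
    Bc B (conjL x) (conjL y) = starRingEnd ℂ (Bc B x y) := by
  simp [Bc, Complex.ext_iff]; ring

lemma conjL_smulC (a : ℂ) (x : V × V) :
    conjL (smulC a x) = smulC (starRingEnd ℂ a) (conjL x) := by
  simp [smulC, Prod.ext_iff, sub_eq_add_neg]; abel

lemma smulC_smulC (a b : ℂ) (x : V × V) : smulC a (smulC b x) = smulC (a * b) x := by
  simp [smulC, Prod.ext_iff, smul_sub, smul_add, smul_smul, Complex.mul_re, Complex.mul_im,
    sub_smul, add_smul, mul_comm]
  constructor <;> abel



variable (J : Module.End ℝ V) (lam : ℝ)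

/-- J - iλ -/
def Nop : Module.End ℝ (V × V) := (J.prodMap J : (V × V) →ₗ[ℝ] (V × V)) - lam • jmap
/-- J + iλ -/
def Mop : Module.End ℝ (V × V) := (J.prodMap J : (V × V) →ₗ[ℝ] (V × V)) + lam • jmap

@[simp] lemma Nop_apply (x : V × V) : Nop J lam x = (J x.1 + lam • x.2, J x.2 - lam • x.1) := by
  simp [Nop, Prod.ext_iff, sub_eq_add_neg]
@[simp] lemma Mop_apply (x : V × V) : Mop J lam x = (J x.1 - lam • x.2, J x.2 + lam • x.1) := by
  simp [Mop, Prod.ext_iff, sub_eq_add_neg]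

lemma conjL_Nop (x : V × V) : conjL (Nop J lam x) = Mop J lam (conjL x) := by
  simp [Prod.ext_iff]; abel
lemma conjL_Nop_pow (r : ℕ) (x : V × V) :
    conjL ((Nop J lam ^ r) x) = (Mop J lam ^ r) (conjL x) := by
  induction r generalizing x with
  | zero => simp
  | succ n ih =>
      rw [pow_succ, pow_succ, Module.End.mul_apply, Module.End.mul_apply, ih, conjL_Nop]

lemma Nop_jmap (x : V × V) : Nop J lam (jmap x) = jmap (Nop J lam x) := by
  simp [Prod.ext_iff]; abel
lemma Nop_smulC (a : ℂ) (x : V × V) : Nop J lam (smulC a x) = smulC a (Nop J lam x) := by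
  simp only [smulC, map_add, map_smul, Nop_jmap]
lemma Nop_pow_smulC (r : ℕ) (a : ℂ) (x : V × V) :
    (Nop J lam ^ r) (smulC a x) = smulC a ((Nop J lam ^ r) x) := by
  induction r generalizing x with
  | zero => simp
  | succ n ih =>
      rw [pow_succ, Module.End.mul_apply, Module.End.mul_apply, Nop_smulC, ih]

variable (hskew : ∀ x y, B (J x) y = - B x (J y))

lemma Bc_Nop_left (hskew : ∀ x y, B (J x) y = - B x (J y)) (x y : V × V) : Bc B (Nop J lam x) y = - Bc B x (Mop J lam y) := by
  simp [Bc, Complex.ext_iff, hskew]; constructor <;> ring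
lemma Bc_Mop_left (hskew : ∀ x y, B (J x) y = - B x (J y)) (x y : V × V) : Bc B (Mop J lam x) y = - Bc B x (Nop J lam y) := by
  simp [Bc, Complex.ext_iff, hskew]; constructor <;> ring
lemma Bc_Nop_pow_left (hskew : ∀ x y, B (J x) y = - B x (J y)) (r : ℕ) (x y : V × V) :
    Bc B ((Nop J lam ^ r) x) y = (-1 : ℂ) ^ r * Bc B x ((Mop J lam ^ r) y) := by
  induction r generalizing x with
  | zero => simp
  | succ n ih =>
      rw [pow_succ, Module.End.mul_apply, ih, Bc_Nop_left B J lam hskew,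
        pow_succ' (Mop J lam), Module.End.mul_apply, pow_succ]
      ring
lemma Bc_Mop_pow_left (hskew : ∀ x y, B (J x) y = - B x (J y)) (r : ℕ) (x y : V × V) :
    Bc B ((Mop J lam ^ r) x) y = (-1 : ℂ) ^ r * Bc B x ((Nop J lam ^ r) y) := by
  induction r generalizing x with
  | zero => simp
  | succ n ih =>
      rw [pow_succ, Module.End.mul_apply, ih, Bc_Mop_left B J lam hskew,
        pow_succ' (Nop J lam), Module.End.mul_apply, pow_succ]
      ring

open Polynomial in
/-- K = J² + λ² -/
noncomputable def Kop : Module.End ℝ V := Polynomial.aeval J (Polynomial.X ^ 2 + Polynomial.C (lam ^ 2))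

lemma Kop_apply (x : V) : Kop J lam x = J (J x) + lam ^ 2 • x := by
  simp [Kop, Polynomial.aeval_add, Polynomial.aeval_X_pow, pow_two, Module.algebraMap_end_apply,
    Module.End.mul_apply, smul_smul]

lemma NM_eq : Nop J lam * Mop J lam = (Kop J lam).prodMap (Kop J lam) := by
  apply LinearMap.ext; intro x
  simp [Module.End.mul_apply, Kop_apply, Prod.ext_iff, map_sub, map_smul, smul_smul, smul_sub,
    smul_add, pow_two]
  constructor <;> abel

lemma MN_eq : Mop J lam * Nop J lam = (Kop J lam).prodMap (Kop J lam) := by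
  apply LinearMap.ext; intro x
  simp [Module.End.mul_apply, Kop_apply, Prod.ext_iff, map_sub, map_smul, smul_smul, smul_sub,
    smul_add, pow_two]
  constructor <;> abel

lemma NM_comm : Commute (Nop J lam) (Mop J lam) := by
  unfold Commute SemiconjBy
  rw [NM_eq, MN_eq]

lemma prodMap_pow (K : Module.End ℝ V) (n : ℕ) (x : V × V) :
    ((K.prodMap K) ^ n) x = ((K ^ n) x.1, (K ^ n) x.2) := by
  induction n generalizing x with
  | zero => simp
  | succ m ih => rw [pow_succ', pow_succ', Module.End.mul_apply, ih, Module.End.mul_apply,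
      Module.End.mul_apply]; rfl

lemma jmap_jmap (x : V × V) : jmap (jmap x) = -x := by simp [Prod.ext_iff]

lemma jmap_pow_two_mul (n : ℕ) (x : V × V) : ((jmap ^ (2 * n)) : Module.End ℝ (V × V)) x = ((-1 : ℝ) ^ n) • x := by
  induction n generalizing x with
  | zero => simp
  | succ m ih =>
      have h2 : 2 * (m + 1) = 2 * m + 1 + 1 := by ring
      rw [h2, pow_succ, pow_succ, Module.End.mul_apply, Module.End.mul_apply, ih]
      rw [jmap_jmap, pow_succ, mul_smul]
      simp

lemma Mpow_of_ker_N (m : ℕ) : ∀ z : V × V, Nop J lam z = 0 →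
    ((Mop J lam ^ m)) z = (2 * lam) ^ m • ((jmap ^ m : Module.End ℝ (V × V)) z) := by
  induction m with
  | zero => intro z hz; simp
  | succ k ih =>
      intro z hz
      have h1 : J z.1 + lam • z.2 = 0 := by
        have := congrArg Prod.fst hz; simpa using this
      have h2 : J z.2 - lam • z.1 = 0 := by
        have := congrArg Prod.snd hz; simpa using this
      have e1 : J z.1 = -(lam • z.2) := by rw [← neg_eq_of_add_eq_zero_left h1]
      have e2 : J z.2 = lam • z.1 := by rw [sub_eq_zero] at h2; exact h2
      have hMz : Mop J lam z = (2 * lam) • jmap z := by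
        simp only [Mop_apply, jmap_apply, Prod.ext_iff, Prod.smul_fst, Prod.smul_snd, e1, e2]
        constructor <;> module
      have hNjz : Nop J lam (jmap z) = 0 := by rw [Nop_jmap, hz, map_zero]
      rw [pow_succ, Module.End.mul_apply, hMz, map_smul, ih (jmap z) hNjz,
        pow_succ jmap k, Module.End.mul_apply, smul_smul, pow_succ (2 * lam) k]
      ring_nf

lemma ker_NM_inter (hlam : lam ≠ 0) {l' : ℕ} (hodd : Odd l') (k : ℕ) : ∀ z : V × V,
    ((Nop J lam ^ k)) z = 0 → ((Mop J lam ^ l')) z = 0 → z = 0 := by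
  induction k with
  | zero => intro z h1 _; simpa using h1
  | succ k ih =>
      intro z h1 h2
      set z' := (Nop J lam ^ k) z with hz'def
      have hNz' : Nop J lam z' = 0 := by
        rw [hz'def, ← Module.End.mul_apply, ← pow_succ']
        exact h1
      have hMz' : (Mop J lam ^ l') z' = 0 := by
        have hc : Mop J lam ^ l' * Nop J lam ^ k = Nop J lam ^ k * Mop J lam ^ l' :=
          ((NM_comm J lam).symm.pow_pow l' k).eq
        rw [hz'def, ← Module.End.mul_apply, hc, Module.End.mul_apply, h2, map_zero]
      have hj : ((jmap ^ l' : Module.End ℝ (V × V))) z' = 0 := by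
        have := Mpow_of_ker_N J lam l' z' hNz'
        rw [hMz'] at this
        have h2l : ((2 : ℝ) * lam) ^ l' ≠ 0 := pow_ne_zero _ (by simpa using hlam)
        have := this.symm
        rcases smul_eq_zero.mp this with h | h
        · exact absurd h h2l
        · exact h
      have hz'0 : z' = 0 := by
        have h2j : ((jmap ^ (2 * l') : Module.End ℝ (V × V))) z' = 0 := by
          rw [two_mul, pow_add, Module.End.mul_apply, hj, map_zero]
        rw [jmap_pow_two_mul] at h2j
        have : ((-1 : ℝ)) ^ l' ≠ 0 := by
          simp [hodd.neg_one_pow]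
        rcases smul_eq_zero.mp h2j with h | h
        · exact absurd h this
        · exact h
      exact ih z hz'0 h2

lemma conjL_conjL (x : V × V) : conjL (conjL x) = x := by simp

lemma conjL_Mop (x : V × V) : conjL (Mop J lam x) = Nop J lam (conjL x) := by
  simp [Prod.ext_iff]; constructor <;> abel
lemma conjL_Mop_pow (r : ℕ) (x : V × V) :
    conjL ((Mop J lam ^ r) x) = (Nop J lam ^ r) (conjL x) := by
  induction r generalizing x with
  | zero => simp
  | succ n ih =>
      rw [pow_succ, pow_succ, Module.End.mul_apply, Module.End.mul_apply, ih, conjL_Mop]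

lemma Nop_pow_jmap (r : ℕ) (x : V × V) :
    (Nop J lam ^ r) (jmap x) = jmap ((Nop J lam ^ r) x) := by
  induction r generalizing x with
  | zero => simp
  | succ n ih =>
      rw [pow_succ, Module.End.mul_apply, Module.End.mul_apply, Nop_jmap, ih]

lemma conjL_jmap (x : V × V) : conjL (jmap x) = - jmap (conjL x) := by
  simp [Prod.ext_iff]

lemma Bc_nondeg (hnd : B.Nondegenerate) (z : V × V) (h : ∀ y : V × V, Bc B z y = 0) :
    z = 0 := by
  have h1 : ∀ c : V, B z.1 c = 0 ∧ B z.2 c = 0 := by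
    intro c
    have := Complex.ext_iff.mp (h (c, 0))
    simpa [Bc] using this
  have e1 : z.1 = 0 := hnd.1 _ (fun c => (h1 c).1)
  have e2 : z.2 = 0 := hnd.1 _ (fun c => (h1 c).2)
  exact Prod.ext e1 e2

lemma Bc_neg_right (x y : V × V) : Bc B x (-y) = - Bc B x y := by
  simp [Bc, Complex.ext_iff]; constructor <;> ring


open Polynomial in
lemma Kop_pow_eq_zero {l : ℕ}
    (hmin : minpoly ℝ J = (X ^ 2 + C (lam ^ 2)) ^ l) :
    Kop J lam ^ l = 0 := by
  have h := minpoly.aeval ℝ J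
  rw [hmin, map_pow] at h
  exact h

open Polynomial in
lemma Kop_pow_pred_ne_zero {l : ℕ} (hl : 0 < l)
    (hmin : minpoly ℝ J = (X ^ 2 + C (lam ^ 2)) ^ l) :
    Kop J lam ^ (l - 1) ≠ 0 := by
  intro h
  have hmon : (X ^ 2 + C (lam ^ 2) : ℝ[X]).Monic := by
    apply Polynomial.monic_X_pow_add_C
    norm_num
  have haev : Polynomial.aeval J ((X ^ 2 + C (lam ^ 2) : ℝ[X]) ^ (l - 1)) = 0 := by
    rw [map_pow]; exact h
  have hdvd := minpoly.dvd ℝ J haev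
  rw [hmin] at hdvd
  have hne : ((X ^ 2 + C (lam ^ 2) : ℝ[X]) ^ (l - 1)) ≠ 0 := (hmon.pow _).ne_zero
  have hdeg := Polynomial.natDegree_le_of_dvd hdvd hne
  rw [Polynomial.natDegree_pow, Polynomial.natDegree_pow,
    Polynomial.natDegree_X_pow_add_C] at hdeg
  omega

/-- isotropy of generalized kernels -/
lemma Bc_ker_ker (hsymm : ∀ x y, B x y = B y x)
    (hskew : ∀ x y, B (J x) y = - B x (J y)) (hlam : lam ≠ 0) :
    ∀ n a b, a + b ≤ n → ∀ x y : V × V,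
      (Nop J lam ^ a) x = 0 → (Nop J lam ^ b) y = 0 → Bc B x y = 0 := by
  intro n
  induction n with
  | zero =>
      intro a b hab x y hx hy
      have : a = 0 := by omega
      subst this
      simp only [pow_zero, Module.End.one_apply] at hx
      rw [hx]
      simp [Bc, Complex.ext_iff]
  | succ n ih =>
      intro a b hab x y hx hy
      rcases Nat.eq_zero_or_pos a with ha | ha
      · subst ha
        simp only [pow_zero, Module.End.one_apply] at hx
        rw [hx]; simp [Bc, Complex.ext_iff]
      rcases Nat.eq_zero_or_pos b with hb | hb
      · subst hb
        simp only [pow_zero, Module.End.one_apply] at hy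
        rw [hy]; simp [Bc, Complex.ext_iff]
      -- key identity : 2λ i Bc x y = - Bc (N x) y - Bc x (N y)
      have hMN : Mop J lam y = Nop J lam y + (2 * lam) • jmap y := by
        simp [Prod.ext_iff, two_smul, smul_smul]
        constructor <;> module
      have key : Bc B x (Mop J lam y)
          = Bc B x (Nop J lam y) + (2 * lam : ℂ) * Complex.I * Bc B x y := by
        rw [hMN, Bc_add_right, Bc_smul_right, Bc_jmap_right]
        push_cast
        ring
      have hL : Bc B x (Mop J lam y) = - Bc B (Nop J lam x) y := by
        rw [Bc_Nop_left B J lam hskew]; ring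
      have h1 : Bc B (Nop J lam x) y = 0 := by
        apply ih (a - 1) b (by omega)
        · rw [← Module.End.mul_apply, ← pow_succ]
          have : a - 1 + 1 = a := by omega
          rw [this]; exact hx
        · exact hy
      have h2 : Bc B x (Nop J lam y) = 0 := by
        apply ih a (b - 1) (by omega)
        · exact hx
        · rw [← Module.End.mul_apply, ← pow_succ]
          have : b - 1 + 1 = b := by omega
          rw [this]; exact hy
      have : (2 * lam : ℂ) * Complex.I * Bc B x y = 0 := by
        have hz : (2 * lam : ℂ) * Complex.I * Bc B x y
            = - Bc B (Nop J lam x) y - Bc B x (Nop J lam y) := by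
          rw [← hL, key]; ring
        rw [h1, h2] at hz
        simpa using hz
      have hne : (2 * lam : ℂ) * Complex.I ≠ 0 := by
        apply mul_ne_zero
        · simp [Complex.ext_iff, hlam]
        · exact Complex.I_ne_zero
      exact (mul_eq_zero.mp this).resolve_left hne

open Polynomial in
lemma exists_Npow_ne {l : ℕ} (hl : 0 < l) (hlam : lam ≠ 0)
    (hmin : minpoly ℝ J = (X ^ 2 + C (lam ^ 2)) ^ l) :
    ∃ x : V × V, (Nop J lam ^ l) x = 0 ∧ (Nop J lam ^ (l - 1)) x ≠ 0 := by
  by_contra hcon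
  push_neg at hcon
  have hall : ∀ x : V × V, (Nop J lam ^ l) x = 0 → (Nop J lam ^ (l - 1)) x = 0 := by
    intro x hx
    by_contra hne
    exact hne (hcon x hx)
  have hKl : Kop J lam ^ l = 0 := Kop_pow_eq_zero J lam hmin
  have hNMl : (Nop J lam ^ l) ∘ₗ (Mop J lam ^ l) = 0 := by
    have h1 : Nop J lam ^ l * Mop J lam ^ l = (Nop J lam * Mop J lam) ^ l :=
      ((NM_comm J lam).mul_pow l).symm
    rw [← Module.End.mul_eq_comp, h1, NM_eq]
    apply LinearMap.ext; intro z
    rw [prodMap_pow, hKl]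
    simp
  have hKl1 : ∀ x : V, (Kop J lam ^ (l - 1)) x = 0 := by
    intro x
    have h2 : (Nop J lam ^ (l - 1)) ((Mop J lam ^ l) (x, 0)) = 0 := by
      apply hall
      have := LinearMap.congr_fun hNMl (x, 0)
      simpa using this
    have h3 : (Mop J lam ^ l) (x, 0) = (Mop J lam ^ (l-1)) (Mop J lam (x, 0)) := by
      conv_lhs => rw [show l = (l - 1) + 1 by omega]
      rw [pow_succ, Module.End.mul_apply]
    have h4 : ((Nop J lam ^ (l-1)) * (Mop J lam ^ (l-1))) (Mop J lam (x, 0)) = 0 := by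
      rw [Module.End.mul_apply, ← h3]
      exact h2
    have h5 : Nop J lam ^ (l-1) * Mop J lam ^ (l-1) = (Nop J lam * Mop J lam) ^ (l-1) :=
      ((NM_comm J lam).mul_pow (l-1)).symm
    rw [h5, NM_eq, prodMap_pow] at h4
    have h6 : (Kop J lam ^ (l-1)) (lam • x) = 0 := by
      have := congrArg Prod.snd h4
      simpa using this
    rw [map_smul] at h6
    rcases smul_eq_zero.mp h6 with h | h
    · exact absurd h hlam
    · exact h
  exact Kop_pow_pred_ne_zero J lam hl hmin (LinearMap.ext hKl1)

open Polynomial in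
lemma exists_pair {l : ℕ} (hsymm : ∀ x y, B x y = B y x) (hnd : B.Nondegenerate)
    (hskew : ∀ x y, B (J x) y = - B x (J y))
    (hl : 0 < l) (hodd : Odd l) (hlam : lam ≠ 0)
    (hmin : minpoly ℝ J = (X ^ 2 + C (lam ^ 2)) ^ l) :
    ∃ x y : V × V, (Nop J lam ^ l) x = 0 ∧ (Nop J lam ^ l) y = 0 ∧
      Bc B ((Nop J lam ^ (l - 1)) x) (conjL y) ≠ 0 := by
  obtain ⟨x, hxl, hx1⟩ := exists_Npow_ne J lam hl hlam hmin
  set z := (Nop J lam ^ (l - 1)) x with hzdef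
  have hzker : (Nop J lam ^ l) z = 0 := by
    rw [hzdef, ← Module.End.mul_apply, ← pow_add]
    rw [show l + (l - 1) = (l - 1) + l by omega, pow_add, Module.End.mul_apply, hxl, map_zero]
  by_contra hcon
  push_neg at hcon
  have hzero : ∀ y : V × V, (Nop J lam ^ l) y = 0 → Bc B z (conjL y) = 0 := by
    intro y hy
    exact hcon x y hxl hy
  have hzN : ∀ t : V × V, Bc B z ((Nop J lam ^ l) t) = 0 := by
    intro t
    have hMN0 : (Mop J lam ^ l) ((Nop J lam ^ l) t) = 0 := by
      have h1 : Mop J lam ^ l * Nop J lam ^ l = (Mop J lam * Nop J lam) ^ l :=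
        ((NM_comm J lam).symm.mul_pow l).symm
      rw [← Module.End.mul_apply, h1, MN_eq, prodMap_pow, Kop_pow_eq_zero J lam hmin]
      simp
    have hyk : (Nop J lam ^ l) (conjL ((Nop J lam ^ l) t)) = 0 := by
      rw [← conjL_Mop_pow, hMN0, map_zero]
    have := hzero (conjL ((Nop J lam ^ l) t)) hyk
    rwa [conjL_conjL] at this
  have hMz : (Mop J lam ^ l) z = 0 := by
    apply Bc_nondeg B hnd
    intro t
    rw [Bc_Mop_pow_left B J lam hskew, hzN t, mul_zero]
  have : z = 0 := ker_NM_inter J lam hlam hodd l z hzker hMz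
  exact hx1 this

open Polynomial in
lemma exists_good {l : ℕ} (hsymm : ∀ x y, B x y = B y x) (hnd : B.Nondegenerate)
    (hskew : ∀ x y, B (J x) y = - B x (J y))
    (hl : 0 < l) (hodd : Odd l) (hlam : lam ≠ 0)
    (hmin : minpoly ℝ J = (X ^ 2 + C (lam ^ 2)) ^ l) :
    ∃ x : V × V, (Nop J lam ^ l) x = 0 ∧
      Bc B ((Nop J lam ^ (l - 1)) x) (conjL x) ≠ 0 := by
  by_contra hcon
  push_neg at hcon
  -- s is identically zero on diag, derive s ≡ 0 on kernel
  have hev : Even (l - 1) := Nat.Odd.sub_odd hodd odd_one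
  have hherm : ∀ x y : V × V,
      Bc B ((Nop J lam ^ (l-1)) y) (conjL x)
        = starRingEnd ℂ (Bc B ((Nop J lam ^ (l-1)) x) (conjL y)) := by
    intro x y
    have h1 : starRingEnd ℂ (Bc B ((Nop J lam ^ (l-1)) x) (conjL y))
        = Bc B (conjL ((Nop J lam ^ (l-1)) x)) (conjL (conjL y)) :=
      (Bc_conj_conj B _ _).symm
    rw [h1, conjL_conjL, conjL_Nop_pow, Bc_Mop_pow_left B J lam hskew,
      hev.neg_one_pow, one_mul, Bc_symm B hsymm]
  obtain ⟨x, y, hx, hy, hne⟩ := exists_pair B J lam hsymm hnd hskew hl hodd hlam hmin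
  apply hne
  have hxx := hcon x hx
  have hyy := hcon y hy
  have hxyker : (Nop J lam ^ l) (x + y) = 0 := by rw [map_add, hx, hy, add_zero]
  have hjy : (Nop J lam ^ l) (jmap y) = 0 := by rw [Nop_pow_jmap, hy, map_zero]
  have hxjyker : (Nop J lam ^ l) (x + jmap y) = 0 := by rw [map_add, hx, hjy, zero_add]
  set sxy := Bc B ((Nop J lam ^ (l-1)) x) (conjL y) with hsxy
  set syx := Bc B ((Nop J lam ^ (l-1)) y) (conjL x) with hsyx
  -- expansion of s (x+y) (x+y)
  have e1 : sxy + syx = 0 := by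
    have h := hcon (x + y) hxyker
    rw [map_add, map_add, Bc_add_left, Bc_add_right, Bc_add_right, hcon x hx] at h
    rw [← hsxy, ← hsyx] at h
    rw [hyy] at h
    simpa using h
  have e2 : sxy = syx := by
    have h := hcon (x + jmap y) hxjyker
    rw [map_add, map_add, Bc_add_left, Bc_add_right, Bc_add_right] at h
    simp only [conjL_jmap, Nop_pow_jmap, Bc_neg_right, Bc_jmap_left, Bc_jmap_right,
      hxx, hyy, ← hsxy, ← hsyx] at h
    have h2 : Complex.I * (syx - sxy) = 0 := by linear_combination h
    rcases mul_eq_zero.mp h2 with h3 | h3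
    · exact absurd h3 Complex.I_ne_zero
    · exact (sub_eq_zero.mp h3).symm
  have : sxy = 0 := by
    have h := e1
    rw [e2] at h
    have : (2 : ℂ) * syx = 0 := by rw [two_mul]; exact h
    have h2 := mul_eq_zero.mp this
    rcases h2 with h2 | h2
    · norm_num at h2
    · rw [e2]; exact h2
  exact this

/-- the sequence of invariants c_k(x) = Bc(N^k x, conj x) -/
noncomputable def cval (x : V × V) (k : ℕ) : ℂ :=
  Bc B ((Nop J lam ^ k) x) (conjL x)

lemma Bc_zero_left (y : V × V) : Bc B 0 y = 0 := by
  simp [Bc, Complex.ext_iff]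

lemma cval_ge {l : ℕ} (x : V × V) (hx : (Nop J lam ^ l) x = 0) (k : ℕ) (hk : l ≤ k) :
    cval B J lam x k = 0 := by
  unfold cval
  have : (Nop J lam ^ k) x = 0 := by
    rw [show k = (k - l) + l by omega, pow_add, Module.End.mul_apply, hx, map_zero]
  rw [this, Bc_zero_left]

lemma conj_cval (hsymm : ∀ x y, B x y = B y x)
    (hskew : ∀ x y, B (J x) y = - B x (J y)) (x : V × V) (k : ℕ) :
    starRingEnd ℂ (cval B J lam x k) = (-1 : ℂ) ^ k * cval B J lam x k := by
  unfold cval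
  rw [← Bc_conj_conj B, conjL_conjL, conjL_Nop_pow, Bc_Mop_pow_left B J lam hskew,
    Bc_symm B hsymm]

lemma Bc_Mop_pow_right (hskew : ∀ x y, B (J x) y = - B x (J y)) (r : ℕ) (x y : V × V) :
    Bc B x ((Mop J lam ^ r) y) = (-1 : ℂ) ^ r * Bc B ((Nop J lam ^ r) x) y := by
  rw [Bc_Nop_pow_left B J lam hskew]
  rw [← mul_assoc, ← mul_pow]
  norm_num

lemma cval_step (hskew : ∀ x y, B (J x) y = - B x (J y)) (x : V × V) (a : ℂ) (m k : ℕ) :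
    cval B J lam (x + smulC a ((Nop J lam ^ m) x)) k
      = cval B J lam x k + a * cval B J lam x (k + m)
        + starRingEnd ℂ a * (-1 : ℂ) ^ m * cval B J lam x (k + m)
        + a * starRingEnd ℂ a * (-1 : ℂ) ^ m * cval B J lam x (k + 2 * m) := by
  unfold cval
  have hN : (Nop J lam ^ k) (x + smulC a ((Nop J lam ^ m) x))
      = (Nop J lam ^ k) x + smulC a ((Nop J lam ^ (k + m)) x) := by
    rw [map_add, Nop_pow_smulC, pow_add, Module.End.mul_apply]
  have hC : conjL (x + smulC a ((Nop J lam ^ m) x))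
      = conjL x + smulC (starRingEnd ℂ a) ((Mop J lam ^ m) (conjL x)) := by
    rw [map_add, conjL_smulC, conjL_Nop_pow]
  rw [hN, hC, Bc_add_left, Bc_add_right, Bc_add_right, Bc_smulC_left, Bc_smulC_left,
    Bc_smulC_right, Bc_smulC_right, Bc_Mop_pow_right B J lam hskew,
    Bc_Mop_pow_right B J lam hskew]
  have h1 : (Nop J lam ^ m) ((Nop J lam ^ k) x) = (Nop J lam ^ (k + m)) x := by
    rw [← Module.End.mul_apply, ← pow_add, Nat.add_comm m k]
  have h2 : (Nop J lam ^ m) ((Nop J lam ^ (k + m)) x) = (Nop J lam ^ (k + 2 * m)) x := by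
    rw [← Module.End.mul_apply, ← pow_add, show m + (k + m) = k + 2 * m by ring]
  rw [h1, h2]
  ring

lemma cval_smulC (x : V × V) (a : ℂ) (k : ℕ) :
    cval B J lam (smulC a x) k = a * starRingEnd ℂ a * cval B J lam x k := by
  unfold cval
  rw [Nop_pow_smulC, Bc_smulC_left, conjL_smulC, Bc_smulC_right]
  ring

open Polynomial in
lemma exists_normal {l : ℕ} (hsymm : ∀ x y, B x y = B y x) (hnd : B.Nondegenerate)
    (hskew : ∀ x y, B (J x) y = - B x (J y))
    (hl : 0 < l) (hodd : Odd l) (hlam : lam ≠ 0)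
    (hmin : minpoly ℝ J = (X ^ 2 + C (lam ^ 2)) ^ l) :
    ∃ x : V × V, (Nop J lam ^ l) x = 0 ∧
      (∀ k, k ≠ l - 1 → cval B J lam x k = 0) ∧
      cval B J lam x (l - 1) ≠ 0 ∧ (cval B J lam x (l - 1)).im = 0 := by
  obtain ⟨x₀, hx₀ker, hx₀⟩ := exists_good B J lam hsymm hnd hskew hl hodd hlam hmin
  set γ : ℂ := cval B J lam x₀ (l - 1) with hγdef
  have hγ : γ ≠ 0 := hx₀
  have hev : Even (l - 1) := Nat.Odd.sub_odd hodd odd_one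
  have hγreal : starRingEnd ℂ γ = γ := by
    rw [hγdef, conj_cval B J lam hsymm hskew, hev.neg_one_pow, one_mul]
  -- the correcting recursion
  let F : ℕ → V × V := fun m => Nat.rec x₀
    (fun m prev => prev +
      smulC (-(cval B J lam prev (l - 2 - m)) / (2 * γ)) ((Nop J lam ^ (m + 1)) prev)) m
  have hF0 : F 0 = x₀ := rfl
  have hFsucc : ∀ m, F (m + 1) = F m +
      smulC (-(cval B J lam (F m) (l - 2 - m)) / (2 * γ)) ((Nop J lam ^ (m + 1)) (F m)) :=
    fun m => rfl
  have inv : ∀ m, m ≤ l - 1 → (Nop J lam ^ l) (F m) = 0 ∧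
      cval B J lam (F m) (l - 1) = γ ∧
      (∀ k, l - 1 - m ≤ k → k < l - 1 → cval B J lam (F m) k = 0) := by
    intro m
    induction m with
    | zero =>
        intro _
        refine ⟨hx₀ker, rfl, ?_⟩
        intro k hk1 hk2
        omega
    | succ m ih =>
        intro hm
        obtain ⟨hker, hγm, hzero⟩ := ih (by omega)
        set x := F m with hxdef
        set a : ℂ := -(cval B J lam x (l - 2 - m)) / (2 * γ) with hadef
        have hxker' : (Nop J lam ^ l) (F (m + 1)) = 0 := by
          rw [hFsucc, map_add, Nop_pow_smulC]
          have : (Nop J lam ^ (m+1)) ((Nop J lam ^ l) x) = 0 := by rw [hker, map_zero]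
          rw [← Module.End.mul_apply, ← pow_add] at this
          rw [show m + 1 + l = l + (m+1) by ring] at this
          rw [pow_add, Module.End.mul_apply] at this
          rw [← hxdef, ← hadef, this]
          have : smulC a (0 : V × V) = 0 := by simp [smulC]
          rw [this, add_zero, hker]
        have hstep : ∀ k, cval B J lam (F (m+1)) k
            = cval B J lam x k + a * cval B J lam x (k + (m+1))
              + starRingEnd ℂ a * (-1 : ℂ) ^ (m+1) * cval B J lam x (k + (m+1))
              + a * starRingEnd ℂ a * (-1 : ℂ) ^ (m+1) * cval B J lam x (k + 2 * (m+1)) := by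
          intro k
          rw [hFsucc, ← hxdef, ← hadef]
          exact cval_step B J lam hskew x a (m+1) k
        have htop : cval B J lam (F (m+1)) (l - 1) = γ := by
          rw [hstep]
          rw [cval_ge B J lam x hker (l - 1 + (m+1)) (by omega),
            cval_ge B J lam x hker (l - 1 + 2 * (m+1)) (by omega), hγm]
          ring
        refine ⟨hxker', htop, ?_⟩
        intro k hk1 hk2
        rcases Nat.lt_or_ge k (l - 1 - m) with hcase | hcase
        · -- k = l - 2 - m : the corrected coefficient
          have hkeq : k = l - 2 - m := by omega
          have hksum : k + (m + 1) = l - 1 := by omega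
          rw [hstep, hksum, hγm,
            cval_ge B J lam x hker (k + 2*(m+1)) (by omega)]
          have hpow : ((-1 : ℂ) ^ (l - 2 - m)) * ((-1 : ℂ) ^ (m+1)) = 1 := by
            rw [← pow_add, show l - 2 - m + (m + 1) = l - 1 by omega]
            exact hev.neg_one_pow
          have hconj : starRingEnd ℂ a * (-1 : ℂ) ^ (m+1) = a := by
            have h2 : (starRingEnd ℂ) (2 : ℂ) = 2 := by
              rw [show (2:ℂ) = ((2:ℝ):ℂ) by norm_num, Complex.conj_ofReal]
            calc starRingEnd ℂ a * (-1 : ℂ) ^ (m+1)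
                = (-(((-1:ℂ) ^ (l - 2 - m)) * cval B J lam x (l - 2 - m)) / (2*γ))
                    * (-1:ℂ) ^ (m+1) := by
                  rw [hadef, map_div₀, map_neg, conj_cval B J lam hsymm hskew, map_mul,
                    h2, hγreal]
              _ = -cval B J lam x (l - 2 - m)
                    * (((-1:ℂ) ^ (l - 2 - m)) * ((-1:ℂ) ^ (m+1))) / (2*γ) := by ring
              _ = a := by rw [hpow, hadef]; ring
          rw [hconj, hkeq, mul_zero, add_zero]
          have hγ2 : (2 : ℂ) * γ ≠ 0 := by
            apply mul_ne_zero _ hγ; norm_num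
          rw [hadef]
          field_simp
          ring
        · -- k ≥ l - 1 - m : all terms vanish
          rw [hstep, hzero k (by omega) hk2,
            cval_ge B J lam x hker (k + (m+1)) (by omega),
            cval_ge B J lam x hker (k + 2*(m+1)) (by omega)]
          ring
  obtain ⟨hker, hγfin, hzero⟩ := inv (l-1) le_rfl
  refine ⟨F (l-1), hker, ?_, ?_, ?_⟩
  · intro k hk
    rcases Nat.lt_or_ge k l with hkl | hkl
    · exact hzero k (by omega) (by omega)
    · exact cval_ge B J lam _ hker k (by omega)
  · rw [hγfin]; exact hγ
  · rw [hγfin]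
    have h2 := congrArg Complex.im hγreal
    simp only [Complex.conj_im] at h2
    linarith

end Stmt16

open Stmt16 in
theorem stmt_16_aux {V : Type*} [AddCommGroup V] [Module ℝ V] [FiniteDimensional ℝ V]
    (B : LinearMap.BilinForm ℝ V) (hsymm : ∀ x y, B x y = B y x)
    (hnd : B.Nondegenerate)
    (J : Module.End ℝ V) (hskew : ∀ x y, B (J x) y = - B x (J y))
    (lam : ℝ) (hlam : 0 < lam) (l : ℕ) (hl : 0 < l) (hodd : Odd l)
    (hmin : minpoly ℝ J = (Polynomial.X ^ 2 + Polynomial.C (lam ^ 2)) ^ l) :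
    ∃ (u v : ℕ → V) (ε : ℝ), (ε = 1 ∨ ε = -1) ∧
      u (l + 1) = 0 ∧ v (l + 1) = 0 ∧
      (∀ h, 1 ≤ h → h ≤ l →
        J (u h) = u (h + 1) - lam • v h ∧
        J (v h) = v (h + 1) + lam • u h) ∧
      (∀ h j, 1 ≤ h → h ≤ l → 1 ≤ j → j ≤ l →
        B (u h) (v j) = 0 ∧
        B (u h) (u j) = (if h + j = l + 1 then (-1 : ℝ) ^ j * ε else 0) ∧
        B (v h) (v j) = (if h + j = l + 1 then (-1 : ℝ) ^ j * ε else 0)) ∧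
      LinearIndependent ℝ
        (fun i : Fin l ⊕ Fin l =>
          Sum.elim (fun i : Fin l => u (i + 1)) (fun i : Fin l => v (i + 1)) i) ∧
      (let W := Submodule.span ℝ
          (Set.range (fun i : Fin l ⊕ Fin l =>
            Sum.elim (fun i : Fin l => u (i + 1)) (fun i : Fin l => v (i + 1)) i));
        (∀ y ∈ W, J y ∈ W) ∧ (∀ y ∈ W, y ≠ 0 → ∃ z ∈ W, B y z ≠ 0)) := by
  have hlam' : lam ≠ 0 := ne_of_gt hlam
  obtain ⟨w1, hker1, hzero1, hγne1, hγim1⟩ :=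
    exists_normal B J lam hsymm hnd hskew hl hodd hlam' hmin
  set ρ : ℝ := (cval B J lam w1 (l-1)).re with hρdef
  have hρ : ρ ≠ 0 := by
    intro h
    apply hγne1
    rw [Complex.ext_iff]
    exact ⟨by rw [← hρdef, h]; rfl, by rw [hγim1]; rfl⟩
  set t : ℝ := Real.sqrt (2 / |ρ|) with htdef
  have ht2 : t ^ 2 = 2 / |ρ| := Real.sq_sqrt (by positivity)
  set w : V × V := smulC (t : ℂ) w1 with hwdef
  have hcw : ∀ k, cval B J lam w k = ((t^2 : ℝ) : ℂ) * cval B J lam w1 k := by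
    intro k
    rw [hwdef, cval_smulC, Complex.conj_ofReal]
    push_cast
    ring
  have hker : (Nop J lam ^ l) w = 0 := by
    rw [hwdef, Nop_pow_smulC, hker1]
    simp [smulC]
  have hzero : ∀ k, k ≠ l - 1 → cval B J lam w k = 0 := by
    intro k hk
    rw [hcw, hzero1 k hk, mul_zero]
  set c : ℂ := cval B J lam w (l-1) with hcdef
  have hcim : c.im = 0 := by
    rw [hcdef, hcw, Complex.im_ofReal_mul, hγim1, mul_zero]
  have hcre : c.re = 2 * ρ / |ρ| := by
    rw [hcdef, hcw, Complex.re_ofReal_mul, ht2, ← hρdef]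
    ring
  set ε : ℝ := - c.re / 2 with hεdef
  have hεval : ε = 1 ∨ ε = -1 := by
    rcases lt_or_gt_of_ne hρ with h | h
    · left
      rw [hεdef, hcre, abs_of_neg h]
      field_simp
    · right
      rw [hεdef, hcre, abs_of_pos h]
      field_simp
  
  -- the vectors
  set u : ℕ → V := fun h => ((Nop J lam ^ (h-1)) w).1 with hudef
  set v : ℕ → V := fun h => ((Nop J lam ^ (h-1)) w).2 with hvdef
  have hNge : ∀ k, l ≤ k → (Nop J lam ^ k) w = 0 := by
    intro k hk
    rw [show k = (k - l) + l by omega, pow_add, Module.End.mul_apply, hker, map_zero]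
  have hul1 : u (l + 1) = 0 := by
    rw [hudef]
    simp only [Nat.add_sub_cancel]
    rw [hker]
    rfl
  have hvl1 : v (l + 1) = 0 := by
    rw [hvdef]
    simp only [Nat.add_sub_cancel]
    rw [hker]
    rfl
  have hrec : ∀ h, 1 ≤ h → J (u h) = u (h + 1) - lam • v h ∧
      J (v h) = v (h + 1) + lam • u h := by
    intro h h1
    have hsucc : (Nop J lam ^ ((h+1)-1)) w = Nop J lam ((Nop J lam ^ (h-1)) w) := by
      rw [show (h+1)-1 = (h-1)+1 by omega, pow_succ', Module.End.mul_apply]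
    have e1 : u (h+1) = J (u h) + lam • v h := by
      rw [hudef]
      simp only []
      rw [hsucc, Nop_apply]
    have e2 : v (h+1) = J (v h) - lam • u h := by
      rw [hvdef]
      simp only []
      rw [hsucc, Nop_apply]
    constructor
    · rw [e1]; abel
    · rw [e2]; abel
  -- the Gram matrix
  have key : ∀ h j, 1 ≤ h → h ≤ l → 1 ≤ j → j ≤ l →
      (B (u h) (u j) = (if h + j = l + 1 then (-1:ℝ)^j * ε else 0)) ∧
      (B (v h) (v j) = (if h + j = l + 1 then (-1:ℝ)^j * ε else 0)) ∧
      (B (u h) (v j) = 0) ∧ (B (v h) (u j) = 0) := by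
    intro h j h1 h2 j1 j2
    set y := (Nop J lam ^ (h-1)) w with hydef
    set z := (Nop J lam ^ (j-1)) w with hzdef
    have hy : (Nop J lam ^ l) y = 0 := by
      rw [hydef, ← Module.End.mul_apply, ← pow_add]
      exact hNge _ (by omega)
    have hz : (Nop J lam ^ l) z = 0 := by
      rw [hzdef, ← Module.End.mul_apply, ← pow_add]
      exact hNge _ (by omega)
    have hY : Bc B y z = 0 :=
      Bc_ker_ker B J lam hsymm hskew hlam' (2*l) l l (by omega) y z hy hz
    have hZ : Bc B y (conjL z) = (-1:ℂ)^(j-1) * cval B J lam w ((h-1)+(j-1)) := by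
      rw [hzdef, conjL_Nop_pow, Bc_Mop_pow_right B J lam hskew]
      congr 1
      unfold cval
      rw [hydef, ← Module.End.mul_apply, ← pow_add, Nat.add_comm (j-1) (h-1)]
    have e1 : B (u h) (u j) - B (v h) (v j) = 0 := by
      have := congrArg Complex.re hY
      simpa [Bc] using this
    have e2 : B (u h) (v j) + B (v h) (u j) = 0 := by
      have := congrArg Complex.im hY
      simpa [Bc] using this
    have hsignC : ((-1:ℂ)^(j-1)) = (((-1:ℝ)^(j-1) : ℝ) : ℂ) := by push_cast; ring
    by_cases hij : h + j = l + 1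
    · have hidx : (h-1) + (j-1) = l - 1 := by omega
      rw [hidx, ← hcdef] at hZ
      have e3 : B (u h) (u j) + B (v h) (v j) = (-1:ℝ)^(j-1) * c.re := by
        have := congrArg Complex.re hZ
        rw [hsignC, Complex.re_ofReal_mul] at this
        simpa [Bc] using this
      have e4 : - B (u h) (v j) + B (v h) (u j) = 0 := by
        have := congrArg Complex.im hZ
        rw [hsignC, Complex.im_ofReal_mul, hcim, mul_zero] at this
        simpa [Bc] using this
      have hval : (-1:ℝ)^(j-1) * c.re / 2 = (-1:ℝ)^j * ε := by
        have hjj : (-1:ℝ)^j = (-1:ℝ)^(j-1) * (-1) := by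
          rw [← pow_succ, show j - 1 + 1 = j by omega]
        rw [hεdef, hjj]
        ring
      rw [if_pos hij]
      refine ⟨by linarith, by linarith, by linarith, by linarith⟩
    · have hidx : (h-1) + (j-1) ≠ l - 1 := by omega
      rw [hzero _ hidx, mul_zero] at hZ
      have e3 : B (u h) (u j) + B (v h) (v j) = 0 := by
        have := congrArg Complex.re hZ
        simpa [Bc] using this
      have e4 : - B (u h) (v j) + B (v h) (u j) = 0 := by
        have := congrArg Complex.im hZ
        simpa [Bc] using this
      rw [if_neg hij]
      refine ⟨by linarith, by linarith, by linarith, by linarith⟩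
  have hεne : ε ≠ 0 := by rcases hεval with h | h <;> rw [h] <;> norm_num
  -- the family
  set E : Fin l ⊕ Fin l → V :=
    (fun i : Fin l ⊕ Fin l =>
      Sum.elim (fun i : Fin l => u (i + 1)) (fun i : Fin l => v (i + 1)) i) with hEdef
  have hEinl : ∀ a : Fin l, E (Sum.inl a) = u (↑a + 1) := fun a => rfl
  have hEinr : ∀ a : Fin l, E (Sum.inr a) = v (↑a + 1) := fun a => rfl
  -- pairing computation against dual basis vectors
  have hBE_u : ∀ (i : Fin l ⊕ Fin l) (i₀ : Fin l),
      B (E i) (u (l - ↑i₀)) = if i = Sum.inl i₀ then (-1:ℝ)^(l - ↑i₀) * ε else 0 := by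
    intro i i₀
    have hj1 : 1 ≤ l - ↑i₀ := by omega
    have hj2 : l - ↑i₀ ≤ l := by omega
    cases i with
    | inl a =>
        rw [hEinl]
        have hk := (key (↑a + 1) (l - ↑i₀) (by omega) (by omega) hj1 hj2).1
        rw [hk]
        by_cases hcond : a = i₀
        · subst hcond
          rw [if_pos (by omega), if_pos rfl]
        · have : ↑a + 1 + (l - ↑i₀) ≠ l + 1 := by
            have : (a : ℕ) ≠ ↑i₀ := fun hc => hcond (Fin.ext hc)
            omega
          rw [if_neg this, if_neg (by simp [hcond])]
    | inr a =>
        rw [hEinr]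
        have hk := (key (↑a + 1) (l - ↑i₀) (by omega) (by omega) hj1 hj2).2.2.2
        rw [hk, if_neg (by simp)]
  have hBE_v : ∀ (i : Fin l ⊕ Fin l) (i₀ : Fin l),
      B (E i) (v (l - ↑i₀)) = if i = Sum.inr i₀ then (-1:ℝ)^(l - ↑i₀) * ε else 0 := by
    intro i i₀
    have hj1 : 1 ≤ l - ↑i₀ := by omega
    have hj2 : l - ↑i₀ ≤ l := by omega
    cases i with
    | inl a =>
        rw [hEinl]
        have hk := (key (↑a + 1) (l - ↑i₀) (by omega) (by omega) hj1 hj2).2.2.1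
        rw [hk, if_neg (by simp)]
    | inr a =>
        rw [hEinr]
        have hk := (key (↑a + 1) (l - ↑i₀) (by omega) (by omega) hj1 hj2).2.1
        rw [hk]
        by_cases hcond : a = i₀
        · subst hcond
          rw [if_pos (by omega), if_pos rfl]
        · have : ↑a + 1 + (l - ↑i₀) ≠ l + 1 := by
            have : (a : ℕ) ≠ ↑i₀ := fun hc => hcond (Fin.ext hc)
            omega
          rw [if_neg this, if_neg (by simp [hcond])]
  have expand : ∀ (g : Fin l ⊕ Fin l → ℝ) (z : V),
      B (∑ i, g i • E i) z = ∑ i, g i * B (E i) z := by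
    intro g z
    rw [map_sum, LinearMap.sum_apply]
    apply Finset.sum_congr rfl
    intro i _
    rw [map_smul, LinearMap.smul_apply, smul_eq_mul]
  have hsum_u : ∀ (g : Fin l ⊕ Fin l → ℝ) (i₀ : Fin l),
      B (∑ i, g i • E i) (u (l - ↑i₀)) = g (Sum.inl i₀) * ((-1:ℝ)^(l - ↑i₀) * ε) := by
    intro g i₀
    rw [expand]
    have hterm : ∀ i, g i * B (E i) (u (l - ↑i₀))
        = if i = Sum.inl i₀ then g i * ((-1:ℝ)^(l - ↑i₀) * ε) else 0 := by
      intro i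
      rw [hBE_u]
      split
      · rfl
      · rw [mul_zero]
    rw [Finset.sum_congr rfl (fun i _ => hterm i),
      Finset.sum_ite_eq' Finset.univ (Sum.inl i₀) (fun i => g i * ((-1:ℝ)^(l - ↑i₀) * ε))]
    simp
  have hsum_v : ∀ (g : Fin l ⊕ Fin l → ℝ) (i₀ : Fin l),
      B (∑ i, g i • E i) (v (l - ↑i₀)) = g (Sum.inr i₀) * ((-1:ℝ)^(l - ↑i₀) * ε) := by
    intro g i₀
    rw [expand]
    have hterm : ∀ i, g i * B (E i) (v (l - ↑i₀))
        = if i = Sum.inr i₀ then g i * ((-1:ℝ)^(l - ↑i₀) * ε) else 0 := by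
      intro i
      rw [hBE_v]
      split
      · rfl
      · rw [mul_zero]
    rw [Finset.sum_congr rfl (fun i _ => hterm i),
      Finset.sum_ite_eq' Finset.univ (Sum.inr i₀) (fun i => g i * ((-1:ℝ)^(l - ↑i₀) * ε))]
    simp
  have hfactor : ∀ i₀ : Fin l, ((-1:ℝ)^(l - ↑i₀) * ε) ≠ 0 := by
    intro i₀
    apply mul_ne_zero _ hεne
    apply pow_ne_zero
    norm_num
  have hindep : LinearIndependent ℝ E := by
    rw [Fintype.linearIndependent_iff]
    intro g hg
    intro i
    cases i with
    | inl i₀ =>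
        have := hsum_u g i₀
        rw [hg] at this
        rw [map_zero] at this
        have h0 : (0 : ℝ) = g (Sum.inl i₀) * ((-1:ℝ)^(l - ↑i₀) * ε) := by
          rw [← this]
          rfl
        rcases mul_eq_zero.mp h0.symm with h | h
        · exact h
        · exact absurd h (hfactor i₀)
    | inr i₀ =>
        have := hsum_v g i₀
        rw [hg] at this
        rw [map_zero] at this
        have h0 : (0 : ℝ) = g (Sum.inr i₀) * ((-1:ℝ)^(l - ↑i₀) * ε) := by
          rw [← this]
          rfl
        rcases mul_eq_zero.mp h0.symm with h | h
        · exact h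
        · exact absurd h (hfactor i₀)
  -- dual vectors are in the range
  have hmem_u : ∀ i₀ : Fin l, u (l - ↑i₀) ∈ Set.range E := by
    intro i₀
    refine ⟨Sum.inl ⟨l - 1 - ↑i₀, by omega⟩, ?_⟩
    rw [hEinl]
    congr 1
    show l - 1 - ↑i₀ + 1 = l - ↑i₀
    omega
  have hmem_v : ∀ i₀ : Fin l, v (l - ↑i₀) ∈ Set.range E := by
    intro i₀
    refine ⟨Sum.inr ⟨l - 1 - ↑i₀, by omega⟩, ?_⟩
    rw [hEinr]
    congr 1
    show l - 1 - ↑i₀ + 1 = l - ↑i₀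
    omega
  refine ⟨u, v, ε, hεval, hul1, hvl1, fun h h1 _ => hrec h h1, ?_, hindep, ?_, ?_⟩
  · intro h j h1 h2 j1 j2
    obtain ⟨kuu, kvv, kuv, _⟩ := key h j h1 h2 j1 j2
    exact ⟨kuv, kuu, kvv⟩
  · -- J-invariance
    intro y hy
    have hgen : Set.range E ⊆
        ((Submodule.span ℝ (Set.range E)).comap J : Set V) := by
      rintro _ ⟨i, rfl⟩
      have hWmem : ∀ x ∈ Set.range E, x ∈ Submodule.span ℝ (Set.range E) :=
        fun x hx => Submodule.subset_span hx
      cases i with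
      | inl a =>
          have ha1 : (1:ℕ) ≤ ↑a + 1 := by omega
          have hJ := (hrec (↑a + 1) ha1).1
          show J (E (Sum.inl a)) ∈ Submodule.span ℝ (Set.range E)
          rw [hEinl, hJ]
          apply sub_mem
          · rcases Nat.lt_or_ge (↑a + 1) l with hlt | hge
            · apply hWmem
              refine ⟨Sum.inl ⟨↑a + 1, hlt⟩, ?_⟩
              rw [hEinl]
            · have : ↑a + 1 = l := by omega
              rw [show (↑a + 1) + 1 = l + 1 by omega, hul1]
              exact Submodule.zero_mem _
          · apply Submodule.smul_mem
            apply hWmem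
            exact ⟨Sum.inr a, rfl⟩
      | inr a =>
          have ha1 : (1:ℕ) ≤ ↑a + 1 := by omega
          have hJ := (hrec (↑a + 1) ha1).2
          show J (E (Sum.inr a)) ∈ Submodule.span ℝ (Set.range E)
          rw [hEinr, hJ]
          apply add_mem
          · rcases Nat.lt_or_ge (↑a + 1) l with hlt | hge
            · apply Submodule.subset_span
              refine ⟨Sum.inr ⟨↑a + 1, hlt⟩, ?_⟩
              rw [hEinr]
            · have : ↑a + 1 = l := by omega
              rw [show (↑a + 1) + 1 = l + 1 by omega, hvl1]
              exact Submodule.zero_mem _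
          · apply Submodule.smul_mem
            apply Submodule.subset_span
            exact ⟨Sum.inl a, rfl⟩
    have := Submodule.span_le.mpr hgen hy
    exact this
  · -- nondegeneracy on the span
    intro y hy hyne
    rw [Submodule.mem_span_range_iff_exists_fun ℝ] at hy
    obtain ⟨g, hg⟩ := hy
    have hex : ∃ i, g i ≠ 0 := by
      by_contra hcon
      push_neg at hcon
      apply hyne
      rw [← hg]
      apply Finset.sum_eq_zero
      intro i _
      rw [hcon i, zero_smul]
    obtain ⟨i, hi⟩ := hex
    cases i with
    | inl i₀ =>
        refine ⟨u (l - ↑i₀), Submodule.subset_span (hmem_u i₀), ?_⟩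
        rw [← hg, hsum_u]
        exact mul_ne_zero hi (hfactor i₀)
    | inr i₀ =>
        refine ⟨v (l - ↑i₀), Submodule.subset_span (hmem_v i₀), ?_⟩
        rw [← hg, hsum_v]
        exact mul_ne_zero hi (hfactor i₀)


/-- Stmt 16: Canonical form for skewadjoint J with minimal polynomial (X² + λ²)^l, l odd. -/
theorem stmt_16 {V : Type*} [AddCommGroup V] [Module ℝ V] [FiniteDimensional ℝ V]
    (B : LinearMap.BilinForm ℝ V) (hsymm : ∀ x y, B x y = B y x)
    (hnd : B.Nondegenerate)
    (J : Module.End ℝ V) (hskew : ∀ x y, B (J x) y = - B x (J y))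
    (lam : ℝ) (hlam : 0 < lam) (l : ℕ) (hl : 0 < l) (hodd : Odd l)
    (hmin : minpoly ℝ J = (Polynomial.X ^ 2 + Polynomial.C (lam ^ 2)) ^ l) :
    ∃ (u v : ℕ → V) (ε : ℝ), (ε = 1 ∨ ε = -1) ∧
      u (l + 1) = 0 ∧ v (l + 1) = 0 ∧
      (∀ h, 1 ≤ h → h ≤ l →
        J (u h) = u (h + 1) - lam • v h ∧
        J (v h) = v (h + 1) + lam • u h) ∧
      (∀ h j, 1 ≤ h → h ≤ l → 1 ≤ j → j ≤ l →
        B (u h) (v j) = 0 ∧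
        B (u h) (u j) = (if h + j = l + 1 then (-1 : ℝ) ^ j * ε else 0) ∧
        B (v h) (v j) = (if h + j = l + 1 then (-1 : ℝ) ^ j * ε else 0)) ∧
      LinearIndependent ℝ
        (fun i : Fin l ⊕ Fin l =>
          Sum.elim (fun i : Fin l => u (i + 1)) (fun i : Fin l => v (i + 1)) i) ∧
      (let W := Submodule.span ℝ
          (Set.range (fun i : Fin l ⊕ Fin l =>
            Sum.elim (fun i : Fin l => u (i + 1)) (fun i : Fin l => v (i + 1)) i));
        (∀ y ∈ W, J y ∈ W) ∧ (∀ y ∈ W, y ≠ 0 → ∃ z ∈ W, B y z ≠ 0)) := by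
  exact stmt_16_aux B hsymm hnd J hskew lam hlam l hl hodd hmin
end

section
/- Let μ be a nonzero real number and m a positive integer, and suppose the minimal polynomial of J equals (X − μ)^m · (X + μ)^m. Then there exist vectors v₁, ..., v_m, w₁, ..., w_m in V such that (with v_{m+1} = w_{m+1} = 0): Jv_h = μ·v_h + v_{h+1} and Jw_h = −μ·w_h + w_{h+1} for 1 ≤ h ≤ m; all inner products among these 2m vectors vanish except ⟨v_i, w_j⟩ = (−1)^{j−1} whenever i + j = m + 1; the 2m vectors are linearly independent, their span W is J-invariant, the form ⟨·,·⟩ is nondegenerate on W, and V is the orthogonal direct sum of W and a J-invariant subspace N on which the form is nondegenerate. -/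
open Polynomial

/-- Stmt 17: Canonical form for skewadjoint J with minimal polynomial (X − μ)^m (X + μ)^m. -/
theorem stmt_17 {V : Type*} [AddCommGroup V] [Module ℝ V] [FiniteDimensional ℝ V]
    (B : LinearMap.BilinForm ℝ V) (hsymm : ∀ x y, B x y = B y x)
    (hnd : B.Nondegenerate)
    (J : Module.End ℝ V) (hskew : ∀ x y, B (J x) y = - B x (J y))
    (μ : ℝ) (hμ : μ ≠ 0) (m : ℕ) (hm : 0 < m)
    (hmin : minpoly ℝ J =
      (Polynomial.X - Polynomial.C μ) ^ m * (Polynomial.X + Polynomial.C μ) ^ m) :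
    ∃ v w : ℕ → V,
      v (m + 1) = 0 ∧ w (m + 1) = 0 ∧
      (∀ h, 1 ≤ h → h ≤ m →
        J (v h) = μ • v h + v (h + 1) ∧
        J (w h) = -μ • w h + w (h + 1)) ∧
      (∀ i j, 1 ≤ i → i ≤ m → 1 ≤ j → j ≤ m →
        B (v i) (v j) = 0 ∧ B (w i) (w j) = 0 ∧
        B (v i) (w j) = (if i + j = m + 1 then (-1 : ℝ) ^ (j - 1) else 0)) ∧
      LinearIndependent ℝ
        (fun i : Fin m ⊕ Fin m =>
          Sum.elim (fun i : Fin m => v (i + 1)) (fun i : Fin m => w (i + 1)) i) ∧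
      (let W := Submodule.span ℝ
          (Set.range (fun i : Fin m ⊕ Fin m =>
            Sum.elim (fun i : Fin m => v (i + 1)) (fun i : Fin m => w (i + 1)) i));
        (∀ y ∈ W, J y ∈ W) ∧
        (∀ y ∈ W, y ≠ 0 → ∃ z ∈ W, B y z ≠ 0) ∧
        ∃ N : Submodule ℝ V,
          (∀ y ∈ N, J y ∈ N) ∧
          (∀ y ∈ N, y ≠ 0 → ∃ z ∈ N, B y z ≠ 0) ∧
          (∀ y ∈ W, ∀ z ∈ N, B y z = 0) ∧
          IsCompl W N) := by
  classical
  set Nμ : Module.End ℝ V := aeval J ((X : ℝ[X]) - C μ) with hNdef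
  set Aμ : Module.End ℝ V := aeval J ((X : ℝ[X]) + C μ) with hAdef
  have hNapp : ∀ x : V, Nμ x = J x - μ • x := by
    intro x
    simp [hNdef, map_sub, aeval_X, aeval_C, LinearMap.sub_apply,
      Module.algebraMap_end_apply]
  have hAapp : ∀ x : V, Aμ x = J x + μ • x := by
    intro x
    simp [hAdef, map_add, aeval_X, aeval_C, LinearMap.add_apply,
      Module.algebraMap_end_apply]
  -- moving operators across B
  have hswap : ∀ x y : V, B (Nμ x) y = - B x (Aμ y) := by
    intro x y
    rw [hNapp, hAapp, map_sub, LinearMap.sub_apply, map_smul, LinearMap.smul_apply,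
      map_add, map_smul, hskew]
    simp only [smul_eq_mul]
    ring
  have hswapP : ∀ (l : ℕ) (x y : V), B ((Nμ ^ l) x) y = (-1 : ℝ) ^ l * B x ((Aμ ^ l) y) := by
    intro l
    induction l with
    | zero => intro x y; simp
    | succ l ih =>
      intro x y
      have h1 : (Nμ ^ (l + 1)) x = (Nμ ^ l) (Nμ x) := by
        rw [pow_succ, Module.End.mul_apply]
      have h2 : (Aμ ^ (l + 1)) y = Aμ ((Aμ ^ l) y) := by
        rw [pow_succ', Module.End.mul_apply]
      rw [h1, ih, h2, hswap]
      ring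
  have hswapP' : ∀ (l : ℕ) (x y : V), B x ((Aμ ^ l) y) = (-1 : ℝ) ^ l * B ((Nμ ^ l) x) y := by
    intro l x y
    rw [hswapP l x y, ← mul_assoc, ← pow_add]
    rw [Even.neg_one_pow ⟨l, by ring⟩, one_mul]
  -- products of the two operators vanish
  have haevmul : ∀ p q : ℝ[X], aeval J p * aeval J q = aeval J (p * q) := by
    intro p q; rw [map_mul]
  have hNpow : ∀ l : ℕ, Nμ ^ l = aeval J (((X : ℝ[X]) - C μ) ^ l) := by
    intro l; rw [map_pow]
  have hApow : ∀ l : ℕ, Aμ ^ l = aeval J (((X : ℝ[X]) + C μ) ^ l) := by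
    intro l; rw [map_pow]
  have hzero : ∀ p : ℝ[X], ((X : ℝ[X]) - C μ) ^ m * ((X : ℝ[X]) + C μ) ^ m ∣ p →
      aeval J p = 0 := by
    intro p hp
    obtain ⟨c, rfl⟩ := hp
    rw [map_mul, ← hmin, minpoly.aeval, zero_mul]
  have hNA : ∀ x : V, (Nμ ^ m) ((Aμ ^ m) x) = 0 := by
    intro x
    rw [← Module.End.mul_apply, hNpow, hApow, haevmul, hzero _ dvd_rfl]
    rfl
  have hAN : ∀ x : V, (Aμ ^ m) ((Nμ ^ m) x) = 0 := by
    intro x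
    rw [← Module.End.mul_apply, hNpow, hApow, haevmul, hzero _ (dvd_of_eq (mul_comm _ _))]
    rfl
  -- Bezout decomposition
  have hcop : IsCoprime ((X : ℝ[X]) - C μ) ((X : ℝ[X]) + C μ) := by
    refine ⟨C (-(2 * μ)⁻¹), C ((2 * μ)⁻¹), ?_⟩
    have h2 : (2 * μ) ≠ 0 := mul_ne_zero two_ne_zero hμ
    have : C (-(2 * μ)⁻¹) * ((X : ℝ[X]) - C μ) + C ((2 * μ)⁻¹) * ((X : ℝ[X]) + C μ)
        = C ((2 * μ)⁻¹ * (2 * μ)) := by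
      simp only [map_neg, map_mul, map_ofNat]
      ring
    rw [this, inv_mul_cancel₀ h2, map_one]
  obtain ⟨a, b, hab⟩ := (hcop.pow (m := m) (n := m))
  have hdecomp : ∀ x : V, (aeval J a) ((Nμ ^ m) x) + (aeval J b) ((Aμ ^ m) x) = x := by
    intro x
    have : aeval J (a * ((X : ℝ[X]) - C μ) ^ m + b * ((X : ℝ[X]) + C μ) ^ m) = 1 := by
      rw [hab, map_one]
    have h2 := congrArg (fun (T : Module.End ℝ V) => T x) this
    simp only [map_add, map_mul, LinearMap.add_apply, Module.End.mul_apply,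
      Module.End.one_apply] at h2
    rw [← hNpow, ← hApow] at h2
    exact h2
  have hkerN : ∀ x : V, (Nμ ^ m) ((aeval J b) ((Aμ ^ m) x)) = 0 := by
    intro x
    have : (Nμ ^ m) * (aeval J b) * (Aμ ^ m) = 0 := by
      rw [hNpow, hApow, haevmul, haevmul]
      exact hzero _ ⟨b, by ring⟩
    have h2 := congrArg (fun (T : Module.End ℝ V) => T x) this
    simpa only [Module.End.mul_apply, LinearMap.zero_apply] using h2
  have hkerA : ∀ x : V, (Aμ ^ m) ((aeval J a) ((Nμ ^ m) x)) = 0 := by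
    intro x
    have : (Aμ ^ m) * (aeval J a) * (Nμ ^ m) = 0 := by
      rw [hNpow, hApow, haevmul, haevmul]
      exact hzero _ ⟨a, by ring⟩
    have h2 := congrArg (fun (T : Module.End ℝ V) => T x) this
    simpa only [Module.End.mul_apply, LinearMap.zero_apply] using h2
  -- total isotropy of the two kernels
  have hisoP : ∀ x y : V, (Nμ ^ m) x = 0 → (Nμ ^ m) y = 0 → B x y = 0 := by
    intro x y hx hy
    have hy2 : y = (Aμ ^ m) ((aeval J b) y) := by
      have h1 := hdecomp y
      rw [hy, map_zero, zero_add] at h1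
      have hc : (aeval J b) ((Aμ ^ m) y) = (Aμ ^ m) ((aeval J b) y) := by
        rw [← Module.End.mul_apply, ← Module.End.mul_apply, hApow, haevmul, haevmul,
          mul_comm b]
      rw [hc] at h1
      exact h1.symm
    rw [hy2, hswapP', hx]
    simp
  have hisoM : ∀ x y : V, (Aμ ^ m) x = 0 → (Aμ ^ m) y = 0 → B x y = 0 := by
    intro x y hx hy
    have hx2 : x = (Nμ ^ m) ((aeval J a) x) := by
      have h1 := hdecomp x
      rw [hx, map_zero, add_zero] at h1
      have hc : (aeval J a) ((Nμ ^ m) x) = (Nμ ^ m) ((aeval J a) x) := by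
        rw [← Module.End.mul_apply, ← Module.End.mul_apply, hNpow, haevmul, haevmul,
          mul_comm a]
      rw [hc] at h1
      exact h1.symm
    rw [hx2, hswapP, hy]
    simp
  -- existence of a top chain vector
  have hv₁ : ∃ v₁ : V, (Nμ ^ m) v₁ = 0 ∧ (Nμ ^ (m - 1)) v₁ ≠ 0 := by
    by_contra hc
    push_neg at hc
    have h0 : aeval J (((X : ℝ[X]) - C μ) ^ (m - 1) * ((X : ℝ[X]) + C μ) ^ m) = 0 := by
      apply LinearMap.ext
      intro x
      have : (aeval J (((X : ℝ[X]) - C μ) ^ (m - 1) * ((X : ℝ[X]) + C μ) ^ m)) x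
          = (Nμ ^ (m - 1)) ((Aμ ^ m) x) := by
        rw [← haevmul, ← hNpow, ← hApow, Module.End.mul_apply]
      rw [this, hc _ (hNA x)]
      rfl
    have hdvd := minpoly.dvd ℝ J h0
    rw [hmin] at hdvd
    have hmon1 : (((X : ℝ[X]) - C μ) ^ (m - 1) * ((X : ℝ[X]) + C μ) ^ m).Monic :=
      ((monic_X_sub_C μ).pow _).mul ((monic_X_add_C μ).pow _)
    have hdeg := Polynomial.natDegree_le_of_dvd hdvd hmon1.ne_zero
    have d1 : ((((X : ℝ[X]) - C μ) ^ m) * (((X : ℝ[X]) + C μ) ^ m)).natDegree = m + m := by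
      rw [Polynomial.Monic.natDegree_mul ((monic_X_sub_C μ).pow _) ((monic_X_add_C μ).pow _),
        natDegree_pow, natDegree_pow, natDegree_X_sub_C, natDegree_X_add_C, mul_one]
    have d2 : ((((X : ℝ[X]) - C μ) ^ (m - 1)) * (((X : ℝ[X]) + C μ) ^ m)).natDegree
        = (m - 1) + m := by
      rw [Polynomial.Monic.natDegree_mul ((monic_X_sub_C μ).pow _) ((monic_X_add_C μ).pow _),
        natDegree_pow, natDegree_pow, natDegree_X_sub_C, natDegree_X_add_C, mul_one, mul_one]
    rw [d1, d2] at hdeg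
    omega
  obtain ⟨v₁, hv1m, hv1ne⟩ := hv₁
  set e : ℕ → V := fun k => (Nμ ^ k) v₁ with hedef
  have hNe : ∀ (i k : ℕ), (Nμ ^ i) (e k) = e (k + i) := by
    intro i k
    show (Nμ ^ i) ((Nμ ^ k) v₁) = (Nμ ^ (k + i)) v₁
    rw [← Module.End.mul_apply, ← pow_add, Nat.add_comm i k]
  have he0 : ∀ k, m ≤ k → e k = 0 := by
    intro k hk
    have h1 : e k = (Nμ ^ (k - m)) (e m) := by
      rw [hNe, Nat.add_sub_cancel' hk]
    rw [h1]
    show (Nμ ^ (k - m)) ((Nμ ^ m) v₁) = 0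
    rw [hv1m, map_zero]
  have hemk : ∀ k, (Nμ ^ m) (e k) = 0 := fun k => by
    rw [hNe]; exact he0 _ (by omega)
  have hAcomm : ∀ (i k : ℕ) (x : V), (Aμ ^ i) ((Aμ ^ k) x) = (Aμ ^ k) ((Aμ ^ i) x) := by
    intro i k x
    rw [← Module.End.mul_apply, ← Module.End.mul_apply, ← pow_add, ← pow_add, Nat.add_comm i k]
  -- base vector pairing 1 with the end of the chain
  have hbase : ∃ u : V, (Aμ ^ m) u = 0 ∧ B (e (m - 1)) u = 1 := by
    have h1 : ¬ ∀ z, B (e (m - 1)) z = 0 := fun h => hv1ne (hnd.1 _ h)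
    push_neg at h1
    obtain ⟨z, hz⟩ := h1
    have hzdec := hdecomp z
    have hBzP : B (e (m - 1)) ((aeval J b) ((Aμ ^ m) z)) = 0 :=
      hisoP _ _ (hemk _) (hkerN z)
    have hBz : B (e (m - 1)) z
        = B (e (m - 1)) ((aeval J a) ((Nμ ^ m) z)) + B (e (m - 1)) ((aeval J b) ((Aμ ^ m) z)) := by
      conv_lhs => rw [← hzdec]
      rw [map_add]
    have hBzM : B (e (m - 1)) ((aeval J a) ((Nμ ^ m) z)) ≠ 0 := by
      rw [hBz, hBzP, add_zero] at hz; exact hz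
    refine ⟨(B (e (m - 1)) ((aeval J a) ((Nμ ^ m) z)))⁻¹ • ((aeval J a) ((Nμ ^ m) z)), ?_, ?_⟩
    · rw [map_smul, hkerA, smul_zero]
    · rw [map_smul, smul_eq_mul, inv_mul_cancel₀ hBzM]
  -- triangular correction
  have key : ∀ l : ℕ, l ≤ m - 1 → ∃ u : V, (Aμ ^ m) u = 0 ∧ B (e (m - 1)) u = 1 ∧
      ∀ k, k < m - 1 → m - 1 - l ≤ k → B (e k) u = 0 := by
    intro l
    induction l with
    | zero =>
      intro _
      obtain ⟨u, h1, h2⟩ := hbase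
      exact ⟨u, h1, h2, fun k hk1 hk2 => absurd hk2 (by omega)⟩
    | succ l ih =>
      intro hl
      obtain ⟨u, hu1, hu2, hu3⟩ := ih (by omega)
      set s := (-1 : ℝ) ^ (l + 1) * B (e (m - 1 - (l + 1))) u with hs
      have hexp : ∀ k, B (e k) (u - s • ((Aμ ^ (l + 1)) u))
          = B (e k) u - s * ((-1 : ℝ) ^ (l + 1) * B (e (k + (l + 1))) u) := by
        intro k
        rw [map_sub, map_smul, smul_eq_mul, hswapP', hNe]
      refine ⟨u - s • ((Aμ ^ (l + 1)) u), ?_, ?_, ?_⟩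
      · rw [map_sub, hu1, map_smul, hAcomm, hu1, map_zero, smul_zero, sub_zero]
      · rw [hexp, he0 (m - 1 + (l + 1)) (by omega), map_zero, LinearMap.zero_apply,
          mul_zero, mul_zero, sub_zero, hu2]
      · intro k hk1 hk2
        rcases eq_or_lt_of_le hk2 with heq | hlt
        · rw [hexp, ← heq, show (m - 1 - (l + 1)) + (l + 1) = m - 1 by omega, hu2, mul_one, hs]
          set c := B (e (m - 1 - (l + 1))) u with hc
          set t := ((-1 : ℝ)) ^ (l + 1) with ht
          have hsq : t * t = 1 := by
            rw [ht, ← pow_add]; exact Even.neg_one_pow ⟨l + 1, by ring⟩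
          linear_combination (-c) * hsq
        · rw [hexp, hu3 k hk1 (by omega), he0 (k + (l + 1)) (by omega), map_zero,
            LinearMap.zero_apply, mul_zero, mul_zero, sub_zero]
  obtain ⟨w₁, hw1, hw2, hw3⟩ := key (m - 1) le_rfl
  have hBe : ∀ k, B (e k) w₁ = if k = m - 1 then 1 else 0 := by
    intro k
    rcases lt_trichotomy k (m - 1) with h | h | h
    · rw [if_neg (by omega)]; exact hw3 k h (by omega)
    · rw [h, if_pos rfl]; exact hw2
    · rw [if_neg (by omega), he0 _ (by omega), map_zero, LinearMap.zero_apply]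
  have hA0 : ∀ k, m ≤ k → (Aμ ^ k) w₁ = 0 := by
    intro k hk
    rw [show k = (k - m) + m by omega, pow_add, Module.End.mul_apply, hw1, map_zero]
  have hAw : ∀ k, (Aμ ^ m) ((Aμ ^ k) w₁) = 0 := by
    intro k
    rw [hAcomm, hw1, map_zero]
  -- the key pairing computations
  have hvwB : ∀ k l : ℕ, B (e k) ((Aμ ^ l) w₁)
      = if k + l = m - 1 then (-1 : ℝ) ^ l else 0 := by
    intro k l
    rw [hswapP', hNe, hBe]
    by_cases hc : k + l = m - 1
    · rw [if_pos hc, if_pos hc, mul_one]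
    · rw [if_neg hc, if_neg hc, mul_zero]
  -- the family
  set G : Fin m ⊕ Fin m → V :=
    fun i => Sum.elim (fun i : Fin m => e (i : ℕ)) (fun i : Fin m => (Aμ ^ (i : ℕ)) w₁) i
    with hG
  have hmemWG : ∀ aa, G aa ∈ Submodule.span ℝ (Set.range G) :=
    fun aa => Submodule.subset_span ⟨aa, rfl⟩
  have hext : ∀ g : Fin m ⊕ Fin m → ℝ,
      (∀ bdx, B (∑ aa, g aa • G aa) (G bdx) = 0) → ∀ aa, g aa = 0 := by
    intro g hg
    have hexp : ∀ z : V, B (∑ aa, g aa • G aa) z = ∑ aa, g aa * B (G aa) z := by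
      intro z
      rw [LinearMap.BilinForm.sum_left]
      exact Finset.sum_congr rfl fun aa _ => by rw [LinearMap.BilinForm.smul_left]
    have hinl : ∀ i : Fin m, g (Sum.inl i) = 0 := by
      intro i
      have hiLt := i.isLt
      set j : Fin m := ⟨m - 1 - (i : ℕ), by omega⟩ with hj
      have hjval : (j : ℕ) = m - 1 - (i : ℕ) := rfl
      have h1 := hg (Sum.inr j)
      rw [hexp, Fintype.sum_sum_type] at h1
      have h2 : ∑ j' : Fin m, g (Sum.inr j') * B (G (Sum.inr j')) (G (Sum.inr j)) = 0 := by
        refine Finset.sum_eq_zero fun j' _ => ?_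
        show g (Sum.inr j') * B ((Aμ ^ (j' : ℕ)) w₁) ((Aμ ^ (j : ℕ)) w₁) = 0
        rw [hisoM _ _ (hAw _) (hAw _), mul_zero]
      have h3 : ∑ i' : Fin m, g (Sum.inl i') * B (G (Sum.inl i')) (G (Sum.inr j))
          = g (Sum.inl i) * (-1 : ℝ) ^ (j : ℕ) := by
        have hterm : ∀ i' : Fin m, g (Sum.inl i') * B (G (Sum.inl i')) (G (Sum.inr j))
            = if i' = i then g (Sum.inl i') * (-1 : ℝ) ^ (j : ℕ) else 0 := by
          intro i'
          have hiLt' := i'.isLt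
          show g (Sum.inl i') * B (e (i' : ℕ)) ((Aμ ^ (j : ℕ)) w₁) = _
          rw [hvwB]
          by_cases hcc : i' = i
          · rw [if_pos (by rw [hcc]; omega), if_pos hcc]
          · rw [if_neg (fun hcond => hcc (Fin.ext (by omega))), if_neg hcc, mul_zero]
        rw [Finset.sum_congr rfl (fun i' _ => hterm i'),
          Finset.sum_ite_eq' Finset.univ i (fun i' => g (Sum.inl i') * (-1 : ℝ) ^ (j : ℕ)),
          if_pos (Finset.mem_univ i)]
      rw [h2, h3, add_zero] at h1
      exact (mul_eq_zero.mp h1).resolve_right (pow_ne_zero _ (by norm_num))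
    have hinr : ∀ j : Fin m, g (Sum.inr j) = 0 := by
      intro j
      have hjLt := j.isLt
      set i : Fin m := ⟨m - 1 - (j : ℕ), by omega⟩ with hi
      have hival : (i : ℕ) = m - 1 - (j : ℕ) := rfl
      have h1 := hg (Sum.inl i)
      rw [hexp, Fintype.sum_sum_type] at h1
      have h2 : ∑ i' : Fin m, g (Sum.inl i') * B (G (Sum.inl i')) (G (Sum.inl i)) = 0 := by
        refine Finset.sum_eq_zero fun i' _ => ?_
        show g (Sum.inl i') * B (e (i' : ℕ)) (e (i : ℕ)) = 0
        rw [hisoP _ _ (hemk _) (hemk _), mul_zero]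
      have h3 : ∑ j' : Fin m, g (Sum.inr j') * B (G (Sum.inr j')) (G (Sum.inl i))
          = g (Sum.inr j) * (-1 : ℝ) ^ (j : ℕ) := by
        have hterm : ∀ j' : Fin m, g (Sum.inr j') * B (G (Sum.inr j')) (G (Sum.inl i))
            = if j' = j then g (Sum.inr j') * (-1 : ℝ) ^ (j' : ℕ) else 0 := by
          intro j'
          have hjLt' := j'.isLt
          show g (Sum.inr j') * B ((Aμ ^ (j' : ℕ)) w₁) (e (i : ℕ)) = _
          rw [hsymm, hvwB]
          by_cases hcc : j' = j
          · rw [if_pos (by rw [hcc]; omega), if_pos hcc]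
          · rw [if_neg (fun hcond => hcc (Fin.ext (by omega))), if_neg hcc, mul_zero]
        rw [Finset.sum_congr rfl (fun j' _ => hterm j')]
        rw [Finset.sum_congr rfl (fun j' _ => by
          rw [show (if j' = j then g (Sum.inr j') * (-1 : ℝ) ^ (j' : ℕ) else 0)
            = (if j' = j then g (Sum.inr j') * (-1 : ℝ) ^ (j : ℕ) else 0) from by
            by_cases hcc : j' = j
            · rw [if_pos hcc, if_pos hcc, hcc]
            · rw [if_neg hcc, if_neg hcc]])]
        rw [Finset.sum_ite_eq' Finset.univ j (fun j' => g (Sum.inr j') * (-1 : ℝ) ^ (j : ℕ)),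
          if_pos (Finset.mem_univ j)]
      rw [h2, h3, zero_add] at h1
      exact (mul_eq_zero.mp h1).resolve_right (pow_ne_zero _ (by norm_num))
    intro aa
    cases aa with
    | inl i => exact hinl i
    | inr j => exact hinr j
  -- linear independence
  have hLI : LinearIndependent ℝ G := by
    rw [Fintype.linearIndependent_iff]
    intro g hg
    exact hext g fun bdx => by rw [hg, map_zero, LinearMap.zero_apply]
  -- W data
  set W : Submodule ℝ V := Submodule.span ℝ (Set.range G) with hWdef
  have hWJ : ∀ y ∈ W, J y ∈ W := by
    intro y hy
    induction hy using Submodule.span_induction with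
    | mem x hx =>
      obtain ⟨aa, rfl⟩ := hx
      cases aa with
      | inl i =>
        show J (e (i : ℕ)) ∈ W
        have hstep : J (e (i : ℕ)) = μ • e (i : ℕ) + e ((i : ℕ) + 1) := by
          have h4 : e ((i : ℕ) + 1) = Nμ (e (i : ℕ)) := by
            show (Nμ ^ ((i : ℕ) + 1)) v₁ = Nμ ((Nμ ^ (i : ℕ)) v₁)
            rw [pow_succ', Module.End.mul_apply]
          rw [h4, hNapp]
          abel
        rw [hstep]
        refine Submodule.add_mem _ (Submodule.smul_mem _ _ (hmemWG (Sum.inl i))) ?_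
        rcases lt_or_ge ((i : ℕ) + 1) m with hlt | hge
        · exact hmemWG (Sum.inl ⟨(i : ℕ) + 1, hlt⟩)
        · rw [he0 _ hge]; exact Submodule.zero_mem _
      | inr j =>
        show J ((Aμ ^ (j : ℕ)) w₁) ∈ W
        have hstep : J ((Aμ ^ (j : ℕ)) w₁)
            = -μ • ((Aμ ^ (j : ℕ)) w₁) + (Aμ ^ ((j : ℕ) + 1)) w₁ := by
          have h4 : (Aμ ^ ((j : ℕ) + 1)) w₁ = Aμ ((Aμ ^ (j : ℕ)) w₁) := by
            rw [pow_succ', Module.End.mul_apply]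
          rw [h4, hAapp, neg_smul]
          abel
        rw [hstep]
        refine Submodule.add_mem _ (Submodule.smul_mem _ _ (hmemWG (Sum.inr j))) ?_
        rcases lt_or_ge ((j : ℕ) + 1) m with hlt | hge
        · exact hmemWG (Sum.inr ⟨(j : ℕ) + 1, hlt⟩)
        · rw [hA0 _ hge]; exact Submodule.zero_mem _
    | zero => rw [map_zero]; exact Submodule.zero_mem _
    | add x y hx hy ihx ihy => rw [map_add]; exact Submodule.add_mem _ ihx ihy
    | smul c x hx ihx => rw [map_smul]; exact Submodule.smul_mem _ _ ihx
  have hWnd : ∀ y ∈ W, y ≠ 0 → ∃ z ∈ W, B y z ≠ 0 := by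
    intro y hy hy0
    by_contra hcon
    push_neg at hcon
    rw [hWdef, Submodule.mem_span_range_iff_exists_fun] at hy
    obtain ⟨g, hgy⟩ := hy
    have hg0 := hext g fun bdx => by rw [hgy]; exact hcon _ (hmemWG bdx)
    apply hy0
    rw [← hgy]
    exact Finset.sum_eq_zero fun aa _ => by rw [hg0, zero_smul]
  have hrefl : B.IsRefl := fun x y hxy => by rw [hsymm]; exact hxy
  have hrestr : (B.restrict W).Nondegenerate := by
    refine ⟨fun x hx => ?_, fun x hx => ?_⟩
    · by_contra hx0
      obtain ⟨z, hzW, hz⟩ := hWnd x.1 x.2 fun h => hx0 (Subtype.ext h)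
      exact hz (by simpa using hx ⟨z, hzW⟩)
    · by_contra hx0
      obtain ⟨z, hzW, hz⟩ := hWnd x.1 x.2 fun h => hx0 (Subtype.ext h)
      exact hz (by rw [hsymm]; simpa using hx ⟨z, hzW⟩)
  have hcompl :=
    LinearMap.BilinForm.isCompl_orthogonal_of_restrict_nondegenerate (B := B) (W := W)
      hrefl hrestr
  have hmemN : ∀ y : V, y ∈ B.orthogonal W ↔ ∀ x ∈ W, B x y = 0 := by
    intro y
    rw [LinearMap.BilinForm.mem_orthogonal_iff]
  have hNJ : ∀ y ∈ B.orthogonal W, J y ∈ B.orthogonal W := by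
    intro y hy
    rw [hmemN] at hy ⊢
    intro x hx
    have h6 : B x (J y) = - B (J x) y := by rw [hskew x y, neg_neg]
    rw [h6, hy (J x) (hWJ x hx), neg_zero]
  have hNnd : ∀ y ∈ B.orthogonal W, y ≠ 0 → ∃ z ∈ B.orthogonal W, B y z ≠ 0 := by
    intro y hy hy0
    have h1 : ¬ ∀ z, B y z = 0 := fun hz => hy0 (hnd.1 _ hz)
    push_neg at h1
    obtain ⟨x, hx⟩ := h1
    have hxWN : x ∈ W ⊔ B.orthogonal W := by
      rw [codisjoint_iff.mp hcompl.codisjoint]; exact Submodule.mem_top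
    obtain ⟨p, hp, n, hn, rfl⟩ := Submodule.mem_sup.mp hxWN
    have hyp : B y p = 0 := by rw [hsymm]; exact (hmemN y).mp hy p hp
    refine ⟨n, hn, fun h7 => hx ?_⟩
    rw [map_add, hyp, zero_add]
    exact h7
  have hWN : ∀ y ∈ W, ∀ z ∈ B.orthogonal W, B y z = 0 :=
    fun y hyW z hzN => (hmemN z).mp hzN y hyW
  -- assemble
  refine ⟨fun h => e (h - 1), fun h => (Aμ ^ (h - 1)) w₁, ?_, ?_, ?_, ?_, ?_, ?_⟩
  · simpa using he0 m le_rfl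
  · simpa using hw1
  · intro h h1 h2
    constructor
    · show J (e (h - 1)) = μ • e (h - 1) + e (h + 1 - 1)
      have h3 : h + 1 - 1 = (h - 1) + 1 := by omega
      rw [h3]
      have h4 : e ((h - 1) + 1) = Nμ (e (h - 1)) := by
        show (Nμ ^ ((h - 1) + 1)) v₁ = Nμ ((Nμ ^ (h - 1)) v₁)
        rw [pow_succ', Module.End.mul_apply]
      rw [h4, hNapp]
      abel
    · show J ((Aμ ^ (h - 1)) w₁) = -μ • ((Aμ ^ (h - 1)) w₁) + (Aμ ^ (h + 1 - 1)) w₁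
      have h3 : h + 1 - 1 = (h - 1) + 1 := by omega
      rw [h3, pow_succ', Module.End.mul_apply, hAapp, neg_smul]
      abel
  · intro i j hi1 him hj1 hjm
    refine ⟨hisoP _ _ (hemk _) (hemk _), hisoM _ _ (hAw _) (hAw _), ?_⟩
    show B (e (i - 1)) ((Aμ ^ (j - 1)) w₁) = _
    rw [hvwB]
    by_cases hc : i + j = m + 1
    · rw [if_pos (by omega), if_pos hc]
    · rw [if_neg (by omega), if_neg hc]
  · exact hLI
  · exact ⟨hWJ, hWnd, B.orthogonal W, hNJ, hNnd, hWN, hcompl⟩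
end
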